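/- arXiv:2205.06028 — 7 statements merged into one kernel-verified Lean document; each statement's English description precedes it below -/
import Mathlib

section
/- Let ω : (0,1] → ℝ₊ and μ > 0 be such that t ↦ ω(t)/t^μ is almost increasing with constant C₁ (i.e. ω(t)/t^μ ≤ C₁ ω(s)/s^μ for t ≤ s). Suppose g : ℝ₊ → ℝ₊ satisfies ∫_{1/t}^{2/t} g(λ) dλ ≤ C ω(t)² for all t ∈ (0,1). Then there is a constant C₃ such that ∫_{1/t}^{∞} g(λ) dλ ≤ C₃ ω(t)² for all t ∈ (0,1). -/
/-!
Cover `(1/t, ∞)` by the dyadic intervals `(2^i/t, 2^(i+1)/t]`. The hypothesis at scale `t/2^i`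
bounds the `i`-th piece by `C ω(t/2^i)²`, and almost monotonicity of `ω(t)/t^μ` gives
`ω(t/2^i) ≤ C₁ 2^(-iμ) ω(t)`, so the pieces sum to a geometric series of ratio `4^(-μ)`.
-/

open Set MeasureTheory ENNReal

theorem Set.Ioi_subset_iUnion_Ioc_of_forall_exists_le {X : Type*} [LinearOrder X] {a : ℕ → X}
    (ha : ∀ x, ∃ n, x ≤ a n) : Ioi (a 0) ⊆ ⋃ i, Ioc (a i) (a (i + 1)) := by
  intro x hx
  obtain ⟨N, hN⟩ := ha x
  obtain ⟨i, -, hi⟩ := mem_iUnion₂.1 (Ioc_subset_biUnion_Ioc N a ⟨hx, hN⟩)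
  exact mem_iUnion.2 ⟨i, hi⟩

theorem MeasureTheory.lintegral_Ioi_le_tsum_lintegral_Ioc {X : Type*} [LinearOrder X]
    [MeasurableSpace X] {ν : Measure X} (f : X → ℝ≥0∞) {a : ℕ → X} (ha : ∀ x, ∃ n, x ≤ a n) :
    ∫⁻ x in Ioi (a 0), f x ∂ν ≤ ∑' i, ∫⁻ x in Ioc (a i) (a (i + 1)), f x ∂ν :=
  (lintegral_mono_set (Ioi_subset_iUnion_Ioc_of_forall_exists_le ha)).trans
    (lintegral_iUnion_le _ _)

theorem ENNReal.tsum_ofReal_mul_pow {A q : ℝ} (hA : 0 ≤ A) (hq₀ : 0 ≤ q) (hq₁ : q < 1) :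
    ∑' i : ℕ, ENNReal.ofReal (A * q ^ i) = ENNReal.ofReal (A * (1 - q)⁻¹) := by
  rw [← ENNReal.ofReal_tsum_of_nonneg (fun i ↦ by positivity)
    ((summable_geometric_of_lt_one hq₀ hq₁).mul_left A), tsum_mul_left,
    tsum_geometric_of_lt_one hq₀ hq₁]

def AlmostIncreasingOn (f : ℝ → ℝ) (S : Set ℝ) (K : ℝ) : Prop :=
  ∀ x ∈ S, ∀ y ∈ S, x ≤ y → f x ≤ K * f y

theorem AlmostIncreasingOn.le_mul_div_rpow_mul {ω : ℝ → ℝ} {S : Set ℝ} {μ K s t : ℝ}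
    (h : AlmostIncreasingOn (fun x ↦ ω x / x ^ μ) S K) (hS : S ⊆ Ioi 0) (hs : s ∈ S)
    (ht : t ∈ S) (hst : s ≤ t) : ω s ≤ K * (s / t) ^ μ * ω t := by
  have hs₀ : 0 < s := hS hs
  have ht₀ : 0 < t := hS ht
  have h' : ω s / s ^ μ ≤ K * (ω t / t ^ μ) := h s hs t ht hst
  rw [div_le_iff₀ (by positivity)] at h'
  calc ω s ≤ K * (ω t / t ^ μ) * s ^ μ := h'
    _ = K * (s / t) ^ μ * ω t := by
      rw [Real.div_rpow hs₀.le ht₀.le]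
      ring

theorem lintegral_Ioc_two_pow_div_le {ω : ℝ → ℝ} {μ K C : ℝ} {g : ℝ → ℝ≥0∞}
    (hω : ∀ t ∈ Ioc (0:ℝ) 1, 0 ≤ ω t)
    (hai : AlmostIncreasingOn (fun t ↦ ω t / t ^ μ) (Ioc 0 1) K)
    (hdyadic : ∀ t ∈ Ioo (0:ℝ) 1,
      ∫⁻ l in Ioc (1 / t) (2 / t), g l ≤ ENNReal.ofReal (C * ω t ^ 2))
    (hC : 0 ≤ C) {t : ℝ} (ht : t ∈ Ioo 0 1) (i : ℕ) :
    ∫⁻ l in Ioc (2 ^ i / t) (2 ^ (i + 1) / t), g l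
      ≤ ENNReal.ofReal (C * K ^ 2 * ω t ^ 2 * (((1 / 2) ^ μ) ^ 2) ^ i) := by
  obtain ⟨ht₀, ht₁⟩ := ht
  set s := t / 2 ^ i
  have hs₀ : 0 < s := by positivity
  have hst : s ≤ t := div_le_self ht₀.le (one_le_pow₀ one_le_two)
  have hωs : ω s ≤ K * ((1 / 2) ^ μ) ^ i * ω t := by
    have h := hai.le_mul_div_rpow_mul Ioc_subset_Ioi_self ⟨hs₀, hst.trans ht₁.le⟩
      ⟨ht₀, ht₁.le⟩ hst
    rwa [show s / t = (1 / 2) ^ i by rw [div_div_cancel_left' ht₀.ne', one_div, inv_pow],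
      ← Real.rpow_pow_comm (by norm_num)] at h
  have hdyadic_s := hdyadic s ⟨hs₀, hst.trans_lt ht₁⟩
  rw [one_div_div, div_div_eq_mul_div, ← pow_succ'] at hdyadic_s
  refine hdyadic_s.trans (ENNReal.ofReal_le_ofReal ?_)
  calc C * ω s ^ 2 ≤ C * (K * ((1 / 2) ^ μ) ^ i * ω t) ^ 2 := by
        gcongr
        exact hω s ⟨hs₀, hst.trans ht₁.le⟩
    _ = C * K ^ 2 * ω t ^ 2 * (((1 / 2) ^ μ) ^ 2) ^ i := by ring

theorem dyadic_tail_bound_general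
    (ω : ℝ → ℝ) (μ : ℝ) (hμ : 0 < μ)
    (hωnonneg : ∀ t ∈ Ioc (0:ℝ) 1, 0 ≤ ω t)
    (C₁ : ℝ) (hC₁ : 1 ≤ C₁)
    (hai : ∀ t ∈ Ioc (0:ℝ) 1, ∀ s ∈ Ioc (0:ℝ) 1,
      t ≤ s → ω t / t ^ μ ≤ C₁ * (ω s / s ^ μ))
    (g : ℝ → ℝ≥0∞)
    (C : ℝ) (hC : 0 < C)
    (hdyadic : ∀ t ∈ Ioo (0:ℝ) 1,
      ∫⁻ l in Ioc (1/t) (2/t), g l ≤ ENNReal.ofReal (C * ω t ^ 2)) :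
    ∃ C₃ : ℝ, 0 < C₃ ∧ ∀ t ∈ Ioo (0:ℝ) 1,
      ∫⁻ l in Ioi (1/t), g l ≤ ENNReal.ofReal (C₃ * ω t ^ 2) := by
  set q : ℝ := ((1 / 2) ^ μ) ^ 2
  have hq₀ : 0 ≤ q := by positivity
  have hq₁ : q < 1 :=
    pow_lt_one₀ (by positivity) (Real.rpow_lt_one (by norm_num) (by norm_num) hμ) two_ne_zero
  refine ⟨C * C₁ ^ 2 * (1 - q)⁻¹,
    mul_pos (mul_pos hC (by positivity)) (inv_pos.2 (sub_pos.2 hq₁)), fun t ht ↦ ?_⟩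
  have hunbounded : ∀ x : ℝ, ∃ n : ℕ, x ≤ 2 ^ n / t := fun x ↦
    (pow_unbounded_of_one_lt (x * t) one_lt_two).imp fun _ hn ↦ (le_div_iff₀ ht.1).2 hn.le
  calc ∫⁻ l in Ioi (1 / t), g l
      ≤ ∑' i : ℕ, ∫⁻ l in Ioc (2 ^ i / t) (2 ^ (i + 1) / t), g l := by
        simpa using lintegral_Ioi_le_tsum_lintegral_Ioc g hunbounded
    _ ≤ ∑' i : ℕ, ENNReal.ofReal (C * C₁ ^ 2 * ω t ^ 2 * q ^ i) :=
        ENNReal.tsum_le_tsum (lintegral_Ioc_two_pow_div_le hωnonneg hai hdyadic hC.le ht)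
    _ = ENNReal.ofReal (C * C₁ ^ 2 * (1 - q)⁻¹ * ω t ^ 2) := by
        rw [ENNReal.tsum_ofReal_mul_pow (by positivity) hq₀ hq₁, mul_right_comm]

/-- dyadic summation lemma. If ω(t)/t^μ is almost increasing
and ∫_{1/t}^{2/t} g ≤ C ω(t)² for t ∈ (0,1), then ∫_{1/t}^∞ g ≤ C₃ ω(t)². -/
theorem dyadic_tail_bound
    (ω : ℝ → ℝ) (μ : ℝ) (hμ : 0 < μ)
    (hωnonneg : ∀ t ∈ Ioc (0:ℝ) 1, 0 ≤ ω t)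
    (C₁ : ℝ) (hC₁ : 1 ≤ C₁)
    (hai : ∀ t ∈ Ioc (0:ℝ) 1, ∀ s ∈ Ioc (0:ℝ) 1,
      t ≤ s → ω t / t ^ μ ≤ C₁ * (ω s / s ^ μ))
    (g : ℝ → ℝ≥0∞) (hg : Measurable g)
    (C : ℝ) (hC : 0 < C)
    (hdyadic : ∀ t ∈ Ioo (0:ℝ) 1,
      ∫⁻ l in Ioc (1/t) (2/t), g l ≤ ENNReal.ofReal (C * ω t ^ 2)) :
    ∃ C₃ : ℝ, 0 < C₃ ∧ ∀ t ∈ Ioo (0:ℝ) 1,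
      ∫⁻ l in Ioi (1/t), g l ≤ ENNReal.ofReal (C₃ * ω t ^ 2) :=
  dyadic_tail_bound_general ω μ hμ hωnonneg C₁ hC₁ hai g C hC hdyadic
end

section
/- Let α > 0 and let F : ℝ → [0,∞) be measurable with ∫_0^1 (F(t)/t^α)² dt/t < ∞ and F bounded on (0,1) (e.g. F(t) ≤ M). If additionally the tail condition holds that for each t ∈ (0,1), ∫_{1/(2s)}^{1/s} h(λ) dλ ≤ C F(s)² for all s ∈ (0,1) for a nonnegative measurable h with ∫_0^∞ h < ∞, then ∫_0^∞ ( ∫_t^{2t} h(λ) λ^{2α} dλ ) dt/t < ∞. -/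
/-!
Split the `t`-integral at `1/2`. For small `t`, `λ^{2α} ≤ (2t)^{2α}` on `(t, 2t]`, so the integrand
is at most `2^{2α} ‖h‖₁ t^{2α-1}`, which is integrable near `0`. For large `t`, the substitution
`s = 1/(2t)` preserves `dt/t` and turns `(t, 2t]` into `(1/(2s), 1/s]`, so the tail condition
bounds the integrand by `C (F(s)/s^α)²`, whose `ds/s`-integral over `(0, 1)` is finite by the
Besov hypothesis.
-/

open Set MeasureTheory ENNReal

noncomputable def dyadicMoment (h : ℝ → ℝ≥0∞) (p t : ℝ) : ℝ≥0∞ :=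
  ∫⁻ l in Ioc t (2 * t), h l * ENNReal.ofReal (l ^ p)

theorem setLIntegral_Ioc_mul_rpow_le (h : ℝ → ℝ≥0∞) {a b p : ℝ} (ha : 0 ≤ a) (hp : 0 ≤ p) :
    ∫⁻ l in Ioc a b, h l * ENNReal.ofReal (l ^ p)
      ≤ ENNReal.ofReal (b ^ p) * ∫⁻ l in Ioc a b, h l := by
  rw [← lintegral_const_mul' _ _ ofReal_ne_top]
  refine setLIntegral_mono' measurableSet_Ioc fun l hl => ?_
  rw [mul_comm]
  gcongr
  · exact ha.trans hl.1.le
  · exact hl.2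

theorem setLIntegral_Ioi_comp_const_div_mul_inv (f : ℝ → ℝ≥0∞) {a c : ℝ} (ha : 0 < a)
    (hc : 0 < c) :
    ∫⁻ t in Ioi a, f (c / t) * ENNReal.ofReal t⁻¹
      = ∫⁻ s in Ioo 0 (c / a), f s * ENNReal.ofReal s⁻¹ := by
  have himage : (c / ·) '' Ioi a = Ioo 0 (c / a) := by
    ext s
    constructor
    · rintro ⟨t, ht, rfl⟩
      exact ⟨div_pos hc (ha.trans ht), div_lt_div_of_pos_left hc ha ht⟩
    · rintro ⟨hs0, hs⟩
      refine ⟨c / s, ?_, div_div_cancel₀ hc.ne'⟩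
      rwa [mem_Ioi, lt_div_iff₀ hs0, ← lt_div_iff₀' ha]
  have hderiv : ∀ t ∈ Ioi a, HasDerivWithinAt (c / ·) (-c / t ^ 2) (Ioi a) t := fun t ht => by
    simpa only [div_eq_mul_inv, mul_neg, neg_mul] using
      ((hasDerivAt_inv (ha.trans ht).ne').const_mul c).hasDerivWithinAt
  have hinj : InjOn (c / ·) (Ioi a) := fun _ _ _ _ htu =>
    inv_injective (mul_left_cancel₀ hc.ne' htu)
  rw [← himage, lintegral_image_eq_lintegral_abs_deriv_mul measurableSet_Ioi hderiv hinj]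
  refine setLIntegral_congr_fun measurableSet_Ioi fun t ht => ?_
  have ht0 : 0 < t := ha.trans ht
  rw [mul_left_comm, ← ofReal_mul (abs_nonneg _)]
  congr 2
  rw [abs_div, abs_neg, abs_of_pos hc, abs_of_pos (by positivity)]
  field_simp

theorem lintegral_Ioc_dyadicMoment_mul_inv_lt_top (h : ℝ → ℝ≥0∞) {p : ℝ} (hp : 0 < p)
    (hint : ∫⁻ l in Ioi 0, h l < ⊤) (c : ℝ) :
    ∫⁻ t in Ioc 0 c, dyadicMoment h p t * ENNReal.ofReal (1 / t) < ⊤ := by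
  set I := ∫⁻ l in Ioi 0, h l
  have hbound : ∀ t ∈ Ioc 0 c, dyadicMoment h p t * ENNReal.ofReal (1 / t)
      ≤ ENNReal.ofReal (2 ^ p) * I * ENNReal.ofReal (t ^ (p - 1)) := by
    rintro t ⟨ht0, -⟩
    have hscale : (2 * t) ^ p * (1 / t) = 2 ^ p * t ^ (p - 1) := by
      rw [Real.mul_rpow zero_le_two ht0.le, Real.rpow_sub_one ht0.ne']
      ring
    calc dyadicMoment h p t * ENNReal.ofReal (1 / t)
        ≤ ENNReal.ofReal ((2 * t) ^ p) * I * ENNReal.ofReal (1 / t) := by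
          gcongr
          refine (setLIntegral_Ioc_mul_rpow_le h ht0.le hp.le).trans ?_
          gcongr
          exact lintegral_mono_set fun l hl => ht0.trans hl.1
      _ = ENNReal.ofReal (2 ^ p) * I * ENNReal.ofReal (t ^ (p - 1)) := by
          rw [mul_right_comm, ← ofReal_mul (by positivity), hscale,
            ofReal_mul (by positivity), mul_right_comm]
  have hfin : ∫⁻ t in Ioc 0 c, ENNReal.ofReal (t ^ (p - 1)) < ⊤ :=
    (intervalIntegral.intervalIntegrable_rpow' (a := 0) (b := c) (by linarith)).1.lintegral_lt_top
  calc _ ≤ ∫⁻ t in Ioc 0 c, ENNReal.ofReal (2 ^ p) * I * ENNReal.ofReal (t ^ (p - 1)) :=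
        setLIntegral_mono' measurableSet_Ioc hbound
    _ = ENNReal.ofReal (2 ^ p) * I * ∫⁻ t in Ioc 0 c, ENNReal.ofReal (t ^ (p - 1)) :=
        lintegral_const_mul' _ _ (mul_ne_top ofReal_ne_top hint.ne)
    _ < ⊤ := mul_lt_top (mul_lt_top ofReal_lt_top hint) hfin

theorem lintegral_Ioi_dyadicMoment_mul_inv_lt_top (h : ℝ → ℝ≥0∞) (F : ℝ → ℝ)
    {α C : ℝ} (hα : 0 ≤ α)
    (hbesov : ∫⁻ s in Ioo 0 1, ENNReal.ofReal ((F s / s ^ α) ^ 2 * (1 / s)) < ⊤)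
    (htail : ∀ s ∈ Ioo 0 1,
      ∫⁻ l in Ioc (1 / (2 * s)) (1 / s), h l ≤ ENNReal.ofReal (C * F s ^ 2)) :
    ∫⁻ t in Ioi (1 / 2), dyadicMoment h (2 * α) t * ENNReal.ofReal (1 / t) < ⊤ := by
  set g : ℝ → ℝ≥0∞ := fun s => ENNReal.ofReal (C * (F s / s ^ α) ^ 2)
  have hbound : ∀ t ∈ Ioi (1 / 2 : ℝ), dyadicMoment h (2 * α) t ≤ g (1 / 2 / t) := by
    intro t ht
    have ht0 : 0 < t := by linarith [mem_Ioi.mp ht]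
    set s := 1 / 2 / t
    have hs : s ∈ Ioo 0 1 := ⟨by positivity, by rw [div_lt_one ht0]; exact ht⟩
    have hts : 1 / (2 * s) = t ∧ 1 / s = 2 * t := by constructor <;> (simp only [s]; field_simp)
    have hscale : (2 * t) ^ (2 * α) * (C * F s ^ 2) = C * (F s / s ^ α) ^ 2 := by
      rw [← hts.2, one_div, Real.inv_rpow hs.1.le, div_pow, ← Real.rpow_mul_natCast hs.1.le,
        Nat.cast_ofNat, mul_comm α]
      ring
    calc _ ≤ ENNReal.ofReal ((2 * t) ^ (2 * α)) * ∫⁻ l in Ioc t (2 * t), h l :=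
          setLIntegral_Ioc_mul_rpow_le h ht0.le (by positivity)
      _ ≤ ENNReal.ofReal ((2 * t) ^ (2 * α)) * ENNReal.ofReal (C * F s ^ 2) := by
          gcongr
          simpa only [hts] using htail s hs
      _ = g s := by rw [← ofReal_mul (by positivity), hscale]
  calc _ ≤ ∫⁻ t in Ioi (1 / 2), g (1 / 2 / t) * ENNReal.ofReal t⁻¹ :=
        setLIntegral_mono' measurableSet_Ioi fun t ht => by
          rw [one_div t]
          gcongr
          exact hbound t ht
    _ = ∫⁻ s in Ioo 0 1, g s * ENNReal.ofReal s⁻¹ := by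
        rw [setLIntegral_Ioi_comp_const_div_mul_inv g (by norm_num) (by norm_num),
          div_self (by norm_num)]
    _ = ENNReal.ofReal C * ∫⁻ s in Ioo 0 1, ENNReal.ofReal ((F s / s ^ α) ^ 2 * (1 / s)) := by
        rw [← lintegral_const_mul' _ _ ofReal_ne_top]
        refine setLIntegral_congr_fun measurableSet_Ioo fun s hs => ?_
        have hs0 : 0 ≤ s⁻¹ := inv_nonneg.mpr hs.1.le
        rw [one_div, ← ofReal_mul' hs0, ← ofReal_mul' (mul_nonneg (sq_nonneg _) hs0), mul_assoc]
    _ < ⊤ := mul_lt_top ofReal_lt_top hbesov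

theorem besov_decay_general
    (α : ℝ) (hα : 0 < α)
    (F : ℝ → ℝ)
    (hbesov : ∫⁻ t in Ioo (0:ℝ) 1,
      ENNReal.ofReal ((F t / t ^ α) ^ 2 * (1 / t)) < ⊤)
    (h : ℝ → ℝ≥0∞)
    (hint : ∫⁻ l in Ioi (0:ℝ), h l < ⊤)
    (C : ℝ)
    (htail : ∀ s ∈ Ioo (0:ℝ) 1,
      ∫⁻ l in Ioc (1/(2*s)) (1/s), h l ≤ ENNReal.ofReal (C * F s ^ 2)) :
    ∫⁻ t in Ioi (0:ℝ),
      (∫⁻ l in Ioc t (2*t), h l * ENNReal.ofReal (l ^ (2*α)))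
        * ENNReal.ofReal (1 / t) < ⊤ := by
  calc ∫⁻ t in Ioi 0, dyadicMoment h (2 * α) t * ENNReal.ofReal (1 / t)
      ≤ (∫⁻ t in Ioc 0 (1 / 2), dyadicMoment h (2 * α) t * ENNReal.ofReal (1 / t))
        + ∫⁻ t in Ioi (1 / 2), dyadicMoment h (2 * α) t * ENNReal.ofReal (1 / t) := by
        rw [← Ioc_union_Ioi_eq_Ioi (by norm_num : (0 : ℝ) ≤ 1 / 2)]
        exact lintegral_union_le _ _ _
    _ < ⊤ := add_lt_top.mpr
        ⟨lintegral_Ioc_dyadicMoment_mul_inv_lt_top h (by positivity) hint _,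
          lintegral_Ioi_dyadicMoment_mul_inv_lt_top h F hα.le hbesov htail⟩

/-- Besov-type decay of the Fourier transform. If
∫_0^1 (F(t)/t^α)² dt/t < ∞, F is bounded on (0,1), h is a nonnegative
integrable density whose tails satisfy ∫_{1/(2s)}^{1/s} h ≤ C F(s)², then
∫_0^∞ (∫_t^{2t} h(λ) λ^{2α} dλ) dt/t < ∞. -/
theorem besov_decay
    (α : ℝ) (hα : 0 < α)
    (F : ℝ → ℝ) (hF : Measurable F) (hFnonneg : ∀ t, 0 ≤ F t)
    (hbesov : ∫⁻ t in Ioo (0:ℝ) 1,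
      ENNReal.ofReal ((F t / t ^ α) ^ 2 * (1 / t)) < ⊤)
    (M : ℝ) (hFbdd : ∀ t ∈ Ioo (0:ℝ) 1, F t ≤ M)
    (h : ℝ → ℝ≥0∞) (hh : Measurable h)
    (hint : ∫⁻ l in Ioi (0:ℝ), h l < ⊤)
    (C : ℝ) (hC : 0 < C)
    (htail : ∀ s ∈ Ioo (0:ℝ) 1,
      ∫⁻ l in Ioc (1/(2*s)) (1/s), h l ≤ ENNReal.ofReal (C * F s ^ 2)) :
    ∫⁻ t in Ioi (0:ℝ),
      (∫⁻ l in Ioc t (2*t), h l * ENNReal.ofReal (l ^ (2*α)))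
        * ENNReal.ofReal (1 / t) < ⊤ :=
  besov_decay_general α hα F hbesov h hint C htail
end

section
/- Let λ, t ∈ ℝ₊ and let φ_λ be the elementary spherical function on a Damek-Ricci space with homogeneous dimension Q. Then |1 − φ_λ(t)| ≤ (t²/2)(4λ² + Q²/4). -/
/-!
In Sturm–Liouville form the radial equation reads `(D φ')' = -c D φ` with the density
`D(s) = sinh(s/2)^(m+k) cosh(s/2)^k` and `c = λ² + Q²/4`. Integrating from `0`, where
`φ'(0) = 0`, and using `|φ| ≤ 1` together with the monotonicity of `D` gives
`D(s) |φ'(s)| ≤ c s D(s)`, i.e. `|φ'(s)| ≤ c s`; one more integration gives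
`|1 - φ(t)| ≤ c t²/2`, and `c ≤ 4λ² + Q²/4`.
-/

section RadialODE

open Real Set

noncomputable def radialDensity (p q s : ℝ) : ℝ := sinh (s / 2) ^ p * cosh (s / 2) ^ q

variable {p q c : ℝ} {f : ℝ → ℝ}

lemma hasDerivAt_radialDensity {s : ℝ} (hs : 0 < s) :
    HasDerivAt (radialDensity p q)
      ((p / 2 * (cosh (s / 2) / sinh (s / 2)) + q / 2 * tanh (s / 2)) * radialDensity p q s) s := by
  have hsinh : 0 < sinh (s / 2) := sinh_pos_iff.2 (half_pos hs)
  have hcosh : 0 < cosh (s / 2) := cosh_pos _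
  have hhalf : HasDerivAt (fun u : ℝ => u / 2) (1 / 2) s := (hasDerivAt_id s).div_const 2
  have h1 := hhalf.sinh.rpow_const (p := p) (Or.inl hsinh.ne')
  have h2 := hhalf.cosh.rpow_const (p := q) (Or.inl hcosh.ne')
  refine (h1.mul h2).congr_deriv ?_
  rw [rpow_sub_one hsinh.ne', rpow_sub_one hcosh.ne', tanh_eq_sinh_div_cosh, radialDensity]
  field_simp

lemma continuous_radialDensity (hp : 0 ≤ p) (hq : 0 ≤ q) : Continuous (radialDensity p q) := by
  unfold radialDensity
  fun_prop (disch := assumption)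

lemma radialDensity_pos {s : ℝ} (hs : 0 < s) : 0 < radialDensity p q s :=
  mul_pos (rpow_pos_of_pos (sinh_pos_iff.2 (half_pos hs)) p) (rpow_pos_of_pos (cosh_pos _) q)

lemma monotoneOn_radialDensity (hp : 0 ≤ p) (hq : 0 ≤ q) :
    MonotoneOn (radialDensity p q) (Ici 0) := by
  intro s (hs : 0 ≤ s) u (hu : 0 ≤ u) hsu
  have hsinh : 0 ≤ sinh (s / 2) := sinh_nonneg_iff.2 (by linarith)
  have hcosh : cosh (s / 2) ≤ cosh (u / 2) := by
    rw [cosh_le_cosh, abs_of_nonneg (by linarith), abs_of_nonneg (by linarith)]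
    linarith
  exact mul_le_mul (rpow_le_rpow hsinh (sinh_le_sinh.2 (by linarith)) hp)
    (rpow_le_rpow (cosh_pos _).le hcosh hq) (rpow_nonneg (cosh_pos _).le q)
    (rpow_nonneg (hsinh.trans (sinh_le_sinh.2 (by linarith))) p)

def SolvesRadialODE (p q c : ℝ) (f : ℝ → ℝ) : Prop :=
  ∀ t, 0 < t → deriv (deriv f) t
    + (p / 2 * (cosh (t / 2) / sinh (t / 2)) + q / 2 * tanh (t / 2)) * deriv f t = -c * f t

namespace SolvesRadialODE

lemma hasDerivAt_radialDensity_mul_deriv (h : SolvesRadialODE p q c f) (hf : ContDiff ℝ 2 f)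
    {s : ℝ} (hs : 0 < s) :
    HasDerivAt (fun u => radialDensity p q u * deriv f u) (-c * (radialDensity p q s * f s)) s := by
  have hf' : Differentiable ℝ (deriv f) :=
    ((contDiff_succ_iff_deriv (n := 1)).1 hf).2.2.differentiable one_ne_zero
  refine ((hasDerivAt_radialDensity hs).mul (hf' s).hasDerivAt).congr_deriv ?_
  linear_combination radialDensity p q s * h s hs

lemma radialDensity_mul_deriv_eq_integral (hp : 0 ≤ p) (hq : 0 ≤ q)
    (h : SolvesRadialODE p q c f) (hf : ContDiff ℝ 2 f) (hf0 : deriv f 0 = 0)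
    {s : ℝ} (hs : 0 ≤ s) :
    radialDensity p q s * deriv f s = ∫ u in (0)..s, -c * (radialDensity p q u * f u) := by
  have hD := continuous_radialDensity hp hq
  rw [intervalIntegral.integral_eq_sub_of_hasDeriv_right_of_le hs
    (hD.mul (hf.continuous_deriv (by norm_num))).continuousOn
    (fun u hu => (h.hasDerivAt_radialDensity_mul_deriv hf hu.1).hasDerivWithinAt)
    ((continuous_const.mul (hD.mul hf.continuous)).intervalIntegrable 0 s),
    Pi.mul_apply, Pi.mul_apply, hf0, mul_zero, sub_zero]

lemma abs_deriv_le_mul (hp : 0 ≤ p) (hq : 0 ≤ q) (hc : 0 ≤ c)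
    (h : SolvesRadialODE p q c f) (hf : ContDiff ℝ 2 f) (hf0 : deriv f 0 = 0)
    (hbdd : ∀ t, 0 ≤ t → |f t| ≤ 1) {s : ℝ} (hs : 0 ≤ s) : |deriv f s| ≤ c * s := by
  rcases hs.eq_or_lt with rfl | hs
  · simp [hf0]
  have hDs := radialDensity_pos (p := p) (q := q) hs
  have hint : ‖∫ u in (0)..s, -c * (radialDensity p q u * f u)‖
      ≤ c * radialDensity p q s * |s - 0| := by
    refine intervalIntegral.norm_integral_le_of_norm_le_const fun u hu => ?_
    rw [uIoc_of_le hs.le] at hu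
    have hDu := radialDensity_pos (p := p) (q := q) hu.1
    rw [Real.norm_eq_abs, abs_mul, abs_neg, abs_mul, abs_of_nonneg hc, abs_of_pos hDu]
    calc c * (radialDensity p q u * |f u|) ≤ c * (radialDensity p q u * 1) := by
          gcongr; exact hbdd u hu.1.le
      _ ≤ c * radialDensity p q s := by
          rw [mul_one]
          exact mul_le_mul_of_nonneg_left
            (monotoneOn_radialDensity hp hq (mem_Ici.2 hu.1.le) (mem_Ici.2 hs.le) hu.2) hc
  rw [← h.radialDensity_mul_deriv_eq_integral hp hq hf hf0 hs.le, Real.norm_eq_abs, abs_mul,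
    abs_of_pos hDs, sub_zero, abs_of_pos hs] at hint
  exact le_of_mul_le_mul_left (by linarith) hDs

lemma abs_sub_apply_zero_le (hp : 0 ≤ p) (hq : 0 ≤ q) (hc : 0 ≤ c)
    (h : SolvesRadialODE p q c f) (hf : ContDiff ℝ 2 f) (hf0 : deriv f 0 = 0)
    (hbdd : ∀ t, 0 ≤ t → |f t| ≤ 1) {t : ℝ} (ht : 0 ≤ t) :
    |f t - f 0| ≤ c * (t ^ 2 / 2) := by
  have hdiff : Differentiable ℝ f := hf.differentiable (by norm_num)
  have hB (u : ℝ) : HasDerivAt (fun u => c * (u ^ 2 / 2)) (c * u) u :=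
    (((hasDerivAt_pow 2 u).div_const 2).const_mul c).congr_deriv (by ring)
  exact image_norm_le_of_norm_deriv_right_le_deriv_boundary (f := fun u => f u - f 0)
    (hdiff.continuous.sub continuous_const).continuousOn
    (fun u _ => ((hdiff u).hasDerivAt.sub_const (f 0)).hasDerivWithinAt) (by simp) hB
    (fun u hu => h.abs_deriv_le_mul hp hq hc hf hf0 hbdd hu.1) ⟨ht, le_rfl⟩

end SolvesRadialODE

end RadialODE

theorem spherical_upper_bound_general
    (m k : ℕ) (Q : ℝ)
    (φ : ℝ → ℝ → ℝ)
    (hsmooth : ∀ lam : ℝ, ContDiff ℝ 2 (φ lam))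
    (hODE : ∀ lam t : ℝ, 0 < t →
      deriv (deriv (φ lam)) t
        + ((m + k) / 2 * (Real.cosh (t/2) / Real.sinh (t/2))
            + k / 2 * Real.tanh (t/2)) * deriv (φ lam) t
        = -(lam ^ 2 + Q ^ 2 / 4) * φ lam t)
    (hone : ∀ lam : ℝ, φ lam 0 = 1)
    (hder : ∀ lam : ℝ, deriv (φ lam) 0 = 0)
    (hbdd : ∀ lam t : ℝ, 0 ≤ t → |φ lam t| ≤ 1) :
    ∀ lam t : ℝ, 0 ≤ lam → 0 ≤ t →
      |1 - φ lam t| ≤ t ^ 2 / 2 * (4 * lam ^ 2 + Q ^ 2 / 4) := by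
  intro lam t _ ht
  have hbound : |φ lam t - φ lam 0| ≤ (lam ^ 2 + Q ^ 2 / 4) * (t ^ 2 / 2) :=
    SolvesRadialODE.abs_sub_apply_zero_le (p := m + k) (q := k) (by positivity) (by positivity)
      (by positivity) (hODE lam) (hsmooth lam) (hder lam) (hbdd lam) ht
  rw [abs_sub_comm, hone] at hbound
  nlinarith [mul_nonneg (sq_nonneg t) (sq_nonneg lam)]

/-- the spherical function estimate
|1 − φ_λ(t)| ≤ (t²/2)(4λ² + Q²/4) on a Damek-Ricci space with homogeneous
dimension Q = m/2 + k, where φ λ is characterized as the smooth solution of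
the radial ODE φ'' + ((m+k)/2 coth(t/2) + (k/2) tanh(t/2)) φ' = −(λ²+Q²/4) φ
with φ(0) = 1, φ'(0) = 0 and |φ| ≤ 1. -/
theorem spherical_upper_bound
    (m k : ℕ) (hm : 0 < m) (Q : ℝ) (hQ : Q = m / 2 + k)
    (φ : ℝ → ℝ → ℝ)
    (hsmooth : ∀ lam : ℝ, ContDiff ℝ 2 (φ lam))
    (hODE : ∀ lam t : ℝ, 0 < t →
      deriv (deriv (φ lam)) t
        + ((m + k) / 2 * (Real.cosh (t/2) / Real.sinh (t/2))
            + k / 2 * Real.tanh (t/2)) * deriv (φ lam) t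
        = -(lam ^ 2 + Q ^ 2 / 4) * φ lam t)
    (hone : ∀ lam : ℝ, φ lam 0 = 1)
    (hder : ∀ lam : ℝ, deriv (φ lam) 0 = 0)
    (hbdd : ∀ lam t : ℝ, 0 ≤ t → |φ lam t| ≤ 1) :
    ∀ lam t : ℝ, 0 ≤ lam → 0 ≤ t →
      |1 - φ lam t| ≤ t ^ 2 / 2 * (4 * lam ^ 2 + Q ^ 2 / 4) :=
  spherical_upper_bound_general m k Q φ hsmooth hODE hone hder hbdd
end

section
/- Let d ≥ 2, α ∈ (0,2), γ ∈ ℝ. Suppose g : ℝ₊ → [0,∞) is measurable and ∫_{1/t}^∞ g(λ) dλ ≤ C t^{2α+d−1}(log(1/t))^{2γ} for all sufficiently small t ∈ (0,1). Then ∫_{1/t}^∞ g(λ) λ^{d−1} dλ ≤ C' t^{2α}(log(1/t))^{2γ} for all sufficiently small t ∈ (0,1). -/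
/-!
Cut `(1/t, ∞)` into the dyadic blocks `(2^i/t, 2^(i+1)/t]`. On the `i`-th block
`λ^(d-1) ≤ (2^(i+1)/t)^(d-1)`, and the hypothesis at `t/2^i` bounds the mass of `g` there; the
product is at most `2^(d-1) t^(2α) log(1/t)^(2γ)` times `(i+1)^|2γ| 2^(-2αi)`, since for
`t ≤ 1/2` the logarithm `log(2^i/t)` lies between `log(1/t)` and `(i+1) log(1/t)`.
As `α > 0`, these factors form a summable series.
-/

open Set MeasureTheory ENNReal

theorem Ioi_subset_iUnion_Ioc_pow_mul {r a : ℝ} (hr : 1 < r) (ha : 0 < a) :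
    Ioi a ⊆ ⋃ i : ℕ, Ioc (r ^ i * a) (r ^ (i + 1) * a) := by
  intro x hx
  obtain ⟨n, hn₁, hn₂⟩ := exists_mem_Ioc_zpow (div_pos (ha.trans hx) ha) hr
  have hn : 0 ≤ n := by
    by_contra! hneg
    have : r ^ (n + 1) ≤ 1 := zpow_le_one_of_nonpos₀ hr.le (by omega)
    linarith [(one_lt_div ha).2 hx]
  lift n to ℕ using hn
  refine mem_iUnion.2 ⟨n, ?_, ?_⟩
  · rw [← lt_div_iff₀ ha]; exact_mod_cast hn₁
  · rw [← div_le_iff₀ ha]; exact_mod_cast hn₂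

theorem setLIntegral_Ioi_mul_le_tsum {r a : ℝ} (hr : 1 < r) (ha : 0 < a) (g : ℝ → ℝ≥0∞)
    {w : ℝ → ℝ} (hw : MonotoneOn w (Ioi a)) :
    ∫⁻ l in Ioi a, g l * ENNReal.ofReal (w l)
      ≤ ∑' i : ℕ, ENNReal.ofReal (w (r ^ (i + 1) * a)) * ∫⁻ l in Ioi (r ^ i * a), g l := by
  have hblock (i : ℕ) :
      ∫⁻ l in Ioc (r ^ i * a) (r ^ (i + 1) * a), g l * ENNReal.ofReal (w l)
        ≤ ENNReal.ofReal (w (r ^ (i + 1) * a)) * ∫⁻ l in Ioi (r ^ i * a), g l := by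
    have hstart : a ≤ r ^ i * a := le_mul_of_one_le_left ha.le (one_le_pow₀ hr.le)
    calc ∫⁻ l in Ioc (r ^ i * a) (r ^ (i + 1) * a), g l * ENNReal.ofReal (w l)
        ≤ ∫⁻ l in Ioc (r ^ i * a) (r ^ (i + 1) * a),
            g l * ENNReal.ofReal (w (r ^ (i + 1) * a)) := by
          refine setLIntegral_mono' measurableSet_Ioc fun l hl => ?_
          gcongr
          exact hw (hstart.trans_lt hl.1) (hstart.trans_lt (hl.1.trans_le hl.2)) hl.2
      _ = ENNReal.ofReal (w (r ^ (i + 1) * a)) *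
            ∫⁻ l in Ioc (r ^ i * a) (r ^ (i + 1) * a), g l := by
          rw [lintegral_mul_const' _ _ ofReal_ne_top, mul_comm]
      _ ≤ ENNReal.ofReal (w (r ^ (i + 1) * a)) * ∫⁻ l in Ioi (r ^ i * a), g l := by
          gcongr; exact Ioc_subset_Ioi_self
  calc ∫⁻ l in Ioi a, g l * ENNReal.ofReal (w l)
      ≤ ∫⁻ l in ⋃ i : ℕ, Ioc (r ^ i * a) (r ^ (i + 1) * a), g l * ENNReal.ofReal (w l) :=
        lintegral_mono_set (Ioi_subset_iUnion_Ioc_pow_mul hr ha)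
    _ ≤ ∑' i : ℕ, ∫⁻ l in Ioc (r ^ i * a) (r ^ (i + 1) * a), g l * ENNReal.ofReal (w l) :=
        lintegral_iUnion_le _ _
    _ ≤ _ := ENNReal.tsum_le_tsum hblock

theorem summable_add_one_rpow_mul_geometric (p : ℝ) {q : ℝ} (hq₀ : 0 < q) (hq₁ : q < 1) :
    Summable fun n : ℕ => ((n : ℝ) + 1) ^ p * q ^ n := by
  set k := ⌈p⌉₊
  have hgeom : Summable fun n : ℕ => (n : ℝ) ^ k * q ^ n :=
    summable_pow_mul_geometric_of_norm_lt_one k (by rwa [Real.norm_of_nonneg hq₀.le])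
  have hshift : Summable fun n : ℕ => q⁻¹ * (((n + 1 : ℕ) : ℝ) ^ k * q ^ (n + 1)) :=
    ((summable_nat_add_iff (f := fun n : ℕ => (n : ℝ) ^ k * q ^ n) 1).2 hgeom).mul_left _
  refine hshift.of_nonneg_of_le (fun n => by positivity) fun n => ?_
  have h₁ : (1 : ℝ) ≤ n + 1 := by linarith [n.cast_nonneg (α := ℝ)]
  calc ((n : ℝ) + 1) ^ p * q ^ n ≤ ((n : ℝ) + 1) ^ (k : ℝ) * q ^ n := by
        gcongr
        exact Nat.le_ceil p
    _ = q⁻¹ * (((n + 1 : ℕ) : ℝ) ^ k * q ^ (n + 1)) := by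
        rw [Real.rpow_natCast, Nat.cast_succ, pow_succ]; field_simp

theorem rpow_le_rpow_abs_mul_rpow {x L k b : ℝ} (hL : 0 < L) (hLx : L ≤ x) (hxk : x ≤ k * L) :
    x ^ b ≤ k ^ |b| * L ^ b := by
  have hk : 1 ≤ k := by nlinarith
  rcases le_total 0 b with hb | hb
  · calc x ^ b ≤ (k * L) ^ b := by gcongr; linarith
      _ = k ^ |b| * L ^ b := by rw [abs_of_nonneg hb, Real.mul_rpow (by linarith) hL.le]
  · calc x ^ b ≤ L ^ b := Real.rpow_le_rpow_of_nonpos hL hLx hb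
      _ ≤ k ^ |b| * L ^ b :=
          le_mul_of_one_le_left (by positivity) (Real.one_le_rpow hk (abs_nonneg b))

theorem rpow_mul_rpow_add_div_pow {r t : ℝ} (hr : 0 < r) (ht : 0 < t) (a e : ℝ) (i : ℕ) :
    (r ^ (i + 1) * (1 / t)) ^ e * (t / r ^ i) ^ (a + e) = r ^ e * t ^ a * (r ^ (-a)) ^ i := by
  have hs : 0 < t / r ^ i := by positivity
  have hsplit : r ^ (i + 1) * (1 / t) = r * (t / r ^ i)⁻¹ := by field_simp; ring
  have hsa : (t / r ^ i) ^ a = t ^ a * (r ^ (-a)) ^ i := by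
    rw [Real.div_rpow ht.le (by positivity), ← Real.rpow_natCast r i, ← Real.rpow_natCast _ i,
      ← Real.rpow_mul hr.le, ← Real.rpow_mul hr.le, div_eq_mul_inv, ← Real.rpow_neg hr.le]
    ring_nf
  rw [hsplit, Real.mul_rpow hr.le (inv_nonneg.2 hs.le), Real.inv_rpow hs.le, Real.rpow_add hs,
    mul_assoc (r ^ e) (t ^ a), ← hsa]
  field_simp

theorem log_one_div_div_pow_mem_Icc {t : ℝ} (ht : 0 < t) (ht₂ : t ≤ 1 / 2) (i : ℕ) :
    Real.log (1 / (t / 2 ^ i)) ∈ Icc (Real.log (1 / t)) ((i + 1) * Real.log (1 / t)) := by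
  have hlog2 : Real.log 2 ≤ Real.log (1 / t) :=
    Real.log_le_log two_pos (by rw [le_div_iff₀ ht]; linarith)
  have hexp : Real.log (1 / (t / 2 ^ i)) = i * Real.log 2 + Real.log (1 / t) := by
    rw [one_div_div, Real.log_div (by positivity) ht.ne', Real.log_pow, one_div, Real.log_inv]
    ring
  rw [hexp]
  constructor <;> nlinarith [Real.log_pos one_lt_two, (i.cast_nonneg : (0:ℝ) ≤ i)]

theorem dyadic_block_le {g : ℝ → ℝ≥0∞} {C t a e b : ℝ} (hC : 0 ≤ C) (ht : 0 < t)
    (ht₂ : t ≤ 1 / 2) (i : ℕ)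
    (htail : ∫⁻ l in Ioi (1 / (t / 2 ^ i)), g l
      ≤ ENNReal.ofReal (C * (t / 2 ^ i) ^ (a + e) * Real.log (1 / (t / 2 ^ i)) ^ b)) :
    ENNReal.ofReal ((2 ^ (i + 1) * (1 / t)) ^ e) * ∫⁻ l in Ioi (2 ^ i * (1 / t)), g l
      ≤ ENNReal.ofReal
          (C * 2 ^ e * t ^ a * Real.log (1 / t) ^ b *
            (((i : ℝ) + 1) ^ |b| * (2 ^ (-a)) ^ i)) := by
  obtain ⟨hlow, hhigh⟩ := log_one_div_div_pow_mem_Icc ht ht₂ i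
  have hL : 0 < Real.log (1 / t) := Real.log_pos (by rw [lt_div_iff₀ ht]; linarith)
  rw [show (2 : ℝ) ^ i * (1 / t) = 1 / (t / 2 ^ i) by field_simp]
  calc ENNReal.ofReal ((2 ^ (i + 1) * (1 / t)) ^ e) * ∫⁻ l in Ioi (1 / (t / 2 ^ i)), g l
      ≤ ENNReal.ofReal ((2 ^ (i + 1) * (1 / t)) ^ e) *
          ENNReal.ofReal (C * (t / 2 ^ i) ^ (a + e) * Real.log (1 / (t / 2 ^ i)) ^ b) := by
        gcongr
    _ = ENNReal.ofReal (C * ((2 ^ (i + 1) * (1 / t)) ^ e * (t / 2 ^ i) ^ (a + e)) *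
          Real.log (1 / (t / 2 ^ i)) ^ b) := by
        rw [← ENNReal.ofReal_mul (by positivity)]; ring_nf
    _ ≤ _ := by
        rw [rpow_mul_rpow_add_div_pow two_pos ht]
        have := rpow_le_rpow_abs_mul_rpow (b := b) hL hlow hhigh
        gcongr ENNReal.ofReal ?_
        calc C * (2 ^ e * t ^ a * (2 ^ (-a)) ^ i) * Real.log (1 / (t / 2 ^ i)) ^ b
            ≤ C * (2 ^ e * t ^ a * (2 ^ (-a)) ^ i) *
                (((i : ℝ) + 1) ^ |b| * Real.log (1 / t) ^ b) := by
              gcongr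
          _ = _ := by ring

theorem weighted_tail_log_bound_general
    (d α γ : ℝ) (hd : 2 ≤ d) (hα : 0 < α)
    (g : ℝ → ℝ≥0∞)
    (C : ℝ) (hC : 0 < C)
    (t₀ : ℝ) (ht₀ : 0 < t₀)
    (htail : ∀ t : ℝ, 0 < t → t < t₀ →
      ∫⁻ l in Ioi (1/t), g l
        ≤ ENNReal.ofReal (C * t ^ (2*α + d - 1) * Real.log (1/t) ^ (2*γ))) :
    ∃ C' : ℝ, 0 < C' ∧ ∃ t₁ : ℝ, 0 < t₁ ∧ t₁ ≤ 1 ∧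
      ∀ t : ℝ, 0 < t → t < t₁ →
        ∫⁻ l in Ioi (1/t), g l * ENNReal.ofReal (l ^ (d-1))
          ≤ ENNReal.ofReal (C' * t ^ (2*α) * Real.log (1/t) ^ (2*γ)) := by
  set u : ℕ → ℝ := fun i => ((i : ℝ) + 1) ^ |2 * γ| * (2 ^ (-(2 * α))) ^ i
  have hu : Summable u := summable_add_one_rpow_mul_geometric _ (by positivity)
    (Real.rpow_lt_one_of_one_lt_of_neg one_lt_two (by linarith))
  have hS : 0 < ∑' i, u i :=
    hu.tsum_pos (fun i => by positivity) 0 (by simp [u])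
  refine ⟨C * 2 ^ (d - 1) * ∑' i, u i, by positivity, min t₀ (1 / 2), by positivity,
    (min_le_right _ _).trans (by norm_num), fun t ht ht₁ => ?_⟩
  have hmono : MonotoneOn (fun l : ℝ => l ^ (d - 1)) (Ioi (1 / t)) := fun x hx y _ hxy =>
    Real.rpow_le_rpow ((one_div_pos.2 ht).trans hx).le hxy (by linarith)
  have ht₂ : t ≤ 1 / 2 := ht₁.le.trans (min_le_right _ _)
  have hL : 0 < Real.log (1 / t) := Real.log_pos (by rw [lt_div_iff₀ ht]; linarith)
  have hblock (i : ℕ) := dyadic_block_le (e := d - 1) hC.le ht ht₂ i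
    (by
      rw [show 2 * α + (d - 1) = 2 * α + d - 1 by ring]
      exact htail _ (by positivity) ((div_le_self ht.le (one_le_pow₀ one_le_two)).trans_lt
        (ht₁.trans_le (min_le_left _ _))))
  calc ∫⁻ l in Ioi (1 / t), g l * ENNReal.ofReal (l ^ (d - 1))
      ≤ ∑' i : ℕ, ENNReal.ofReal ((2 ^ (i + 1) * (1 / t)) ^ (d - 1)) *
          ∫⁻ l in Ioi (2 ^ i * (1 / t)), g l :=
        setLIntegral_Ioi_mul_le_tsum one_lt_two (by positivity) g hmono
    _ ≤ ∑' i : ℕ,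
          ENNReal.ofReal (C * 2 ^ (d - 1) * t ^ (2 * α) * Real.log (1 / t) ^ (2 * γ) * u i) :=
        ENNReal.tsum_le_tsum hblock
    _ = _ := by
        rw [← ENNReal.ofReal_tsum_of_nonneg (fun i => by positivity) (hu.mul_left _),
          tsum_mul_left]
        ring_nf

/-- if ∫_{1/t}^∞ g ≤ C t^{2α+d−1}(log(1/t))^{2γ} for small t,
then the weighted tails satisfy
∫_{1/t}^∞ g(λ) λ^{d−1} dλ ≤ C' t^{2α}(log(1/t))^{2γ} for small t. -/
theorem weighted_tail_log_bound
    (d α γ : ℝ) (hd : 2 ≤ d) (hα : 0 < α) (hα2 : α < 2)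
    (g : ℝ → ℝ≥0∞) (hg : Measurable g)
    (C : ℝ) (hC : 0 < C)
    (t₀ : ℝ) (ht₀ : 0 < t₀) (ht₀1 : t₀ ≤ 1)
    (htail : ∀ t : ℝ, 0 < t → t < t₀ →
      ∫⁻ l in Ioi (1/t), g l
        ≤ ENNReal.ofReal (C * t ^ (2*α + d - 1) * Real.log (1/t) ^ (2*γ))) :
    ∃ C' : ℝ, 0 < C' ∧ ∃ t₁ : ℝ, 0 < t₁ ∧ t₁ ≤ 1 ∧
      ∀ t : ℝ, 0 < t → t < t₁ →
        ∫⁻ l in Ioi (1/t), g l * ENNReal.ofReal (l ^ (d-1))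
          ≤ ENNReal.ofReal (C' * t ^ (2*α) * Real.log (1/t) ^ (2*γ)) :=
  weighted_tail_log_bound_general d α γ hd hα g C hC t₀ ht₀ htail
end

section
/- Let p ∈ (1,2], p' = p/(p−1), d ≥ 2, α ∈ (0,1], and β ∈ (dp'/(d + αp'), p']. Suppose F : [1,∞) → [0,∞) is measurable and there is C > 0 with ∫_1^s λ^{2p'} F(λ)^{p'} λ^{d−1} dλ ≤ C s^{(2−α)p'} for all s ≥ 1. Then ∫_1^∞ F(λ)^β λ^{d−1} dλ < ∞. -/
open Set MeasureTheory ENNReal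

/-!
On a dyadic annulus `(a, 2a]` with `a ≥ 1` one has
`F^β ≤ a^{-2β} (λ^{2p'} F^{p'})^{β/p'}`, and Hölder's inequality for the measure
`λ^{d-1} dλ` with exponents `β/p'` and `1 - β/p'` bounds the integral of `F^β λ^{d-1}` over the
annulus by `a^{-2β} (C (2a)^{(2-α)p'})^{β/p'} ((2a)^d)^{1-β/p'} ≍ a^{-αβ + d(1-β/p')}`.
The exponent is negative exactly when `β > dp'/(d + αp')`, so the annuli `(2^n, 2^{n+1}]`
contribute a convergent geometric series.
-/
theorem Ioi_one_subset_iUnion_Ioc_pow {b : ℝ} (hb : 1 < b) :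
    Ioi 1 ⊆ ⋃ n : ℕ, Ioc (b ^ n) (b ^ (n + 1)) := by
  intro x hx
  obtain ⟨n, hn⟩ := exists_mem_Ioc_zpow (zero_lt_one.trans hx) hb
  lift n to ℕ using by
    rw [← Int.lt_add_one_iff, ← zpow_lt_zpow_iff_right₀ hb, zpow_zero]
    exact hx.trans_le hn.2
  exact mem_iUnion.2 ⟨n, by exact_mod_cast hn⟩

theorem setLIntegral_Ioi_one_lt_top_of_geometric {g : ℝ → ℝ≥0∞} {b : ℝ} (hb : 1 < b)
    {K ρ : ℝ≥0∞} (hK : K ≠ ⊤) (hρ : ρ < 1)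
    (h : ∀ n : ℕ, ∫⁻ x in Ioc (b ^ n) (b ^ (n + 1)), g x ≤ K * ρ ^ n) :
    ∫⁻ x in Ioi 1, g x < ⊤ :=
  calc ∫⁻ x in Ioi 1, g x
      ≤ ∫⁻ x in ⋃ n : ℕ, Ioc (b ^ n) (b ^ (n + 1)), g x :=
        lintegral_mono_set (Ioi_one_subset_iUnion_Ioc_pow hb)
    _ ≤ ∑' n : ℕ, ∫⁻ x in Ioc (b ^ n) (b ^ (n + 1)), g x := lintegral_iUnion_le _ _
    _ ≤ ∑' n : ℕ, K * ρ ^ n := ENNReal.tsum_le_tsum h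
    _ = K * (1 - ρ)⁻¹ := by rw [ENNReal.tsum_mul_left, ENNReal.tsum_geometric]
    _ < ⊤ := ENNReal.mul_lt_top hK.lt_top (ENNReal.inv_lt_top.2 (tsub_pos_of_lt hρ))

theorem lintegral_rpow_mul_le_of_le_one {α : Type*} [MeasurableSpace α] {μ : Measure α}
    {f w : α → ℝ≥0∞} (hf : AEMeasurable f μ) (hw : AEMeasurable w μ) {r : ℝ}
    (hr0 : 0 ≤ r) (hr1 : r ≤ 1) :
    ∫⁻ x, f x ^ r * w x ∂μ ≤ (∫⁻ x, f x * w x ∂μ) ^ r * (∫⁻ x, w x ∂μ) ^ (1 - r) := by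
  have hsplit : ∀ x, f x ^ r * w x = (f x * w x) ^ r * w x ^ (1 - r) := fun x => by
    rw [ENNReal.mul_rpow_of_nonneg _ _ hr0, mul_assoc, ← ENNReal.rpow_add_of_nonneg _ _ hr0
      (sub_nonneg.2 hr1), add_sub_cancel, ENNReal.rpow_one]
  simp_rw [hsplit]
  exact ENNReal.lintegral_mul_norm_pow_le (hf.mul hw) hw hr0 (sub_nonneg.2 hr1) (by ring)

theorem setLIntegral_Ioc_rpow_le {a b k : ℝ} (ha : 0 ≤ a) (hk : 0 ≤ k) :
    ∫⁻ x in Ioc a b, ENNReal.ofReal (x ^ k) ≤ ENNReal.ofReal (b ^ (k + 1)) := by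
  rcases le_total b a with hba | hab
  · simp [Ioc_eq_empty_of_le hba]
  have hb : 0 ≤ b := ha.trans hab
  calc ∫⁻ x in Ioc a b, ENNReal.ofReal (x ^ k)
      ≤ ∫⁻ _ in Ioc a b, ENNReal.ofReal (b ^ k) :=
        setLIntegral_mono' measurableSet_Ioc fun x hx =>
          ENNReal.ofReal_le_ofReal (Real.rpow_le_rpow (ha.trans hx.1.le) hx.2 hk)
    _ = ENNReal.ofReal (b ^ k * (b - a)) := by
        rw [setLIntegral_const, Real.volume_Ioc, ENNReal.ofReal_mul (by positivity)]
    _ ≤ ENNReal.ofReal (b ^ (k + 1)) := by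
        rw [Real.rpow_add_one' hb (by positivity)]
        gcongr
        linarith

theorem rpow_le_rpow_neg_mul_mul_rpow_div {F l p' β a : ℝ} (hF : 0 ≤ F) (ha : 0 < a)
    (hal : a ≤ l) (hp' : 0 < p') (hβ : 0 ≤ β) :
    F ^ β ≤ a ^ (-(2 * β)) * (l ^ (2 * p') * F ^ p') ^ (β / p') := by
  have hl : 0 < l := ha.trans_le hal
  have hpow : (l ^ (2 * p') * F ^ p') ^ (β / p') = l ^ (2 * β) * F ^ β := by
    rw [Real.mul_rpow (by positivity) (by positivity), ← Real.rpow_mul hl.le, ← Real.rpow_mul hF]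
    field_simp
  have hratio : 1 ≤ a ^ (-(2 * β)) * l ^ (2 * β) := by
    rw [Real.rpow_neg ha.le, ← div_eq_inv_mul, ← Real.div_rpow hl.le ha.le]
    exact Real.one_le_rpow ((one_le_div ha).2 hal) (by positivity)
  rw [hpow, ← mul_assoc]
  exact le_mul_of_one_le_left (by positivity) hratio

theorem setLIntegral_Ioc_two_mul_le_of_growth {F : ℝ → ℝ} (hF : Measurable F)
    (hF0 : ∀ l, 0 ≤ F l) {p' β d C σ a : ℝ} (hp' : 0 < p') (hβ0 : 0 ≤ β) (hβ : β ≤ p')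
    (hd : 1 ≤ d) (hC : 0 ≤ C) (ha : 1 ≤ a)
    (hgrowth : ∫⁻ l in Ioc 1 (2 * a), ENNReal.ofReal (l ^ (2 * p') * F l ^ p' * l ^ (d - 1))
      ≤ ENNReal.ofReal (C * (2 * a) ^ σ)) :
    ∫⁻ l in Ioc a (2 * a), ENNReal.ofReal (F l ^ β * l ^ (d - 1))
      ≤ ENNReal.ofReal (C ^ (β / p') * 2 ^ (σ * (β / p') + d * (1 - β / p')))
        * ENNReal.ofReal (a ^ (σ * (β / p') + d * (1 - β / p') - 2 * β)) := by
  set r := β / p'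
  have ha0 : 0 < a := one_pos.trans_le ha
  have hr0 : 0 ≤ r := by positivity
  have hr1 : r ≤ 1 := (div_le_one hp').2 hβ
  set f : ℝ → ℝ≥0∞ := fun l => ENNReal.ofReal (l ^ (2 * p') * F l ^ p')
  set w : ℝ → ℝ≥0∞ := fun l => ENNReal.ofReal (l ^ (d - 1))
  have hf : Measurable f := ((measurable_id.pow_const _).mul (hF.pow_const _)).ennreal_ofReal
  have hw : Measurable w := (measurable_id.pow_const _).ennreal_ofReal
  have hfw : ∫⁻ l in Ioc a (2 * a), f l * w l ≤ ENNReal.ofReal (C * (2 * a) ^ σ) := by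
    refine le_trans (lintegral_mono_set (Ioc_subset_Ioc_left ha)) (le_of_eq_of_le ?_ hgrowth)
    refine setLIntegral_congr_fun measurableSet_Ioc fun l hl => ?_
    have hFl := hF0 l
    have hl0 : 0 < l := one_pos.trans hl.1
    exact (ENNReal.ofReal_mul (by positivity)).symm
  have hw_le : ∫⁻ l in Ioc a (2 * a), w l ≤ ENNReal.ofReal ((2 * a) ^ d) := by
    simpa using setLIntegral_Ioc_rpow_le ha0.le (sub_nonneg.2 hd) (b := 2 * a)
  calc ∫⁻ l in Ioc a (2 * a), ENNReal.ofReal (F l ^ β * l ^ (d - 1))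
      ≤ ∫⁻ l in Ioc a (2 * a), ENNReal.ofReal (a ^ (-(2 * β))) * (f l ^ r * w l) := by
        refine setLIntegral_mono' measurableSet_Ioc fun l hl => ?_
        have hl0 : 0 < l := ha0.trans hl.1
        have hFl := hF0 l
        rw [ENNReal.ofReal_rpow_of_nonneg (by positivity) hr0,
          ← ENNReal.ofReal_mul (by positivity), ← ENNReal.ofReal_mul (by positivity)]
        refine ENNReal.ofReal_le_ofReal ?_
        rw [← mul_assoc]
        exact mul_le_mul_of_nonneg_right
          (rpow_le_rpow_neg_mul_mul_rpow_div hFl ha0 hl.1.le hp' hβ0) (by positivity)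
    _ = ENNReal.ofReal (a ^ (-(2 * β))) * ∫⁻ l in Ioc a (2 * a), f l ^ r * w l :=
        lintegral_const_mul' _ _ ENNReal.ofReal_ne_top
    _ ≤ ENNReal.ofReal (a ^ (-(2 * β))) *
          ((∫⁻ l in Ioc a (2 * a), f l * w l) ^ r * (∫⁻ l in Ioc a (2 * a), w l) ^ (1 - r)) := by
        gcongr
        exact lintegral_rpow_mul_le_of_le_one hf.aemeasurable hw.aemeasurable hr0 hr1
    _ ≤ ENNReal.ofReal (a ^ (-(2 * β))) *
          (ENNReal.ofReal (C * (2 * a) ^ σ) ^ r * ENNReal.ofReal ((2 * a) ^ d) ^ (1 - r)) := by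
        gcongr
    _ = _ := by
        have h2a : 0 < 2 * a := by positivity
        have hpow : ((2 * a) ^ σ) ^ r * ((2 * a) ^ d) ^ (1 - r)
            = 2 ^ (σ * r + d * (1 - r)) * a ^ (σ * r + d * (1 - r)) := by
          rw [← Real.rpow_mul h2a.le, ← Real.rpow_mul h2a.le, ← Real.rpow_add h2a,
            Real.mul_rpow zero_le_two ha0.le]
        rw [ENNReal.ofReal_rpow_of_nonneg (by positivity) hr0,
          ENNReal.ofReal_rpow_of_nonneg (by positivity) (sub_nonneg.2 hr1),
          ← ENNReal.ofReal_mul (by positivity), ← ENNReal.ofReal_mul (by positivity),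
          ← ENNReal.ofReal_mul (by positivity), Real.mul_rpow hC (by positivity), mul_assoc (C ^ r),
          hpow, sub_eq_add_neg _ (2 * β), Real.rpow_add ha0 (σ * r + d * (1 - r))]
        congr 1
        ring

theorem holder_lipschitz_integrability_general
    (p : ℝ) (hp1 : 1 < p)
    (p' : ℝ) (hp' : p' = p / (p - 1))
    (d : ℝ) (hd : 2 ≤ d)
    (α : ℝ) (hα : 0 < α)
    (β : ℝ) (hβlow : d * p' / (d + α * p') < β) (hβhigh : β ≤ p')
    (F : ℝ → ℝ) (hF : Measurable F) (hFnonneg : ∀ l, 0 ≤ F l)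
    (C : ℝ) (hC : 0 < C)
    (hgrowth : ∀ s : ℝ, 1 ≤ s →
      ∫⁻ l in Ioc (1:ℝ) s, ENNReal.ofReal (l ^ (2*p') * F l ^ p' * l ^ (d-1))
        ≤ ENNReal.ofReal (C * s ^ ((2-α) * p'))) :
    ∫⁻ l in Ioi (1:ℝ), ENNReal.ofReal (F l ^ β * l ^ (d-1)) < ⊤ := by
  have hp'0 : 0 < p' := hp' ▸ div_pos (by linarith) (by linarith)
  have hβ0 : 0 < β := (div_nonneg (by positivity) (by positivity)).trans_lt hβlow
  set γ := (2 - α) * p' * (β / p') + d * (1 - β / p') with hγ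
  have he : γ - 2 * β < 0 := by
    have hβlow' : d * p' < β * (d + α * p') := (div_lt_iff₀ (by positivity)).1 hβlow
    have hscaled : (γ - 2 * β) * p' = d * p' - β * (d + α * p') := by
      rw [hγ]; field_simp; ring
    exact neg_of_mul_neg_left (by linarith) hp'0.le
  have hdyadic : ∀ n : ℕ,
      ∫⁻ l in Ioc (2 ^ n) (2 ^ (n + 1)), ENNReal.ofReal (F l ^ β * l ^ (d - 1))
        ≤ ENNReal.ofReal (C ^ (β / p') * 2 ^ γ) * ENNReal.ofReal (2 ^ (γ - 2 * β)) ^ n := by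
    intro n
    have h2n : (1 : ℝ) ≤ 2 ^ n := one_le_pow₀ one_le_two
    rw [pow_succ']
    refine (setLIntegral_Ioc_two_mul_le_of_growth hF hFnonneg hp'0 hβ0.le hβhigh (by linarith)
      hC.le h2n (hgrowth _ (by linarith))).trans_eq ?_
    rw [← Real.rpow_natCast_mul zero_le_two, mul_comm (n : ℝ), Real.rpow_mul_natCast zero_le_two,
      ENNReal.ofReal_pow (by positivity)]
  exact setLIntegral_Ioi_one_lt_top_of_geometric one_lt_two ofReal_ne_top
    (ofReal_lt_one.2 (Real.rpow_lt_one_of_one_lt_of_neg one_lt_two he)) hdyadic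

/-- integrability of the Fourier transform of Hölder-Lipschitz
functions, abstract form. If ∫_1^s λ^{2p'} F(λ)^{p'} λ^{d−1} dλ ≤ C s^{(2−α)p'}
for all s ≥ 1, then ∫_1^∞ F(λ)^β λ^{d−1} dλ < ∞ for β ∈ (dp'/(d+αp'), p']. -/
theorem holder_lipschitz_integrability
    (p : ℝ) (hp1 : 1 < p) (hp2 : p ≤ 2)
    (p' : ℝ) (hp' : p' = p / (p - 1))
    (d : ℝ) (hd : 2 ≤ d)
    (α : ℝ) (hα : 0 < α) (hα1 : α ≤ 1)
    (β : ℝ) (hβlow : d * p' / (d + α * p') < β) (hβhigh : β ≤ p')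
    (F : ℝ → ℝ) (hF : Measurable F) (hFnonneg : ∀ l, 0 ≤ F l)
    (C : ℝ) (hC : 0 < C)
    (hgrowth : ∀ s : ℝ, 1 ≤ s →
      ∫⁻ l in Ioc (1:ℝ) s, ENNReal.ofReal (l ^ (2*p') * F l ^ p' * l ^ (d-1))
        ≤ ENNReal.ofReal (C * s ^ ((2-α) * p'))) :
    ∫⁻ l in Ioi (1:ℝ), ENNReal.ofReal (F l ^ β * l ^ (d-1)) < ⊤ :=
  holder_lipschitz_integrability_general p hp1 p' hp' d hd α hα β hβlow hβhigh F hF hFnonneg C hC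
    hgrowth
end

section
/- Let k ∈ (0,2], δ₀ > 0, and let ω be a k-th order modulus of continuity on [0,δ₀]. Define I₁(t) = C₄ t⁴ ∫_t^{δ₀} ω(λ)²/λ⁵ dλ + C₆ t⁴ for t ∈ (0,δ₀]. If ω ∈ 𝒵_k (i.e. ∫_t^{δ₀} ω(s)s^{−1−k}ds ≤ C ω(t)t^{−k}), then I₁(t) ≤ C₉ ω(t)² for all t ∈ (0,δ₀]. -/
open Set MeasureTheory

/-!
Write `ω(λ)²/λ⁵ = (ω(λ)/λ^{4-k}) · (ω(λ)/λ^{1+k})`. Since `4 - k ≥ k`, almost decrease of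
`ω(t)/t^k` passes to `ω(t)/t^{4-k}`, so the first factor is at most a constant times `ω(t)/t^{4-k}`
for `λ ≥ t`, and the Zygmund condition bounds the integral of the second factor by a constant times
`ω(t)/t^k`; the powers of `t` cancel against `t⁴`. Likewise `ω(t)/t²` is almost decreasing, so
comparing with `t = δ₀` gives `t² ≲ ω(t)`, i.e. `t⁴ ≲ ω(t)²`.
-/

def AlmostAntitoneOn (f : ℝ → ℝ) (S : Set ℝ) (C : ℝ) : Prop :=
  ∀ t ∈ S, ∀ s ∈ S, s ≤ t → f t ≤ C * f s

section

variable {ω : ℝ → ℝ} {S : Set ℝ} {δ C k m : ℝ}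

theorem AlmostAntitoneOn.div_rpow_of_le
    (h : AlmostAntitoneOn (fun t => ω t / t ^ k) S C) (hS : S ⊆ Ioi 0)
    (hω : ∀ t ∈ S, 0 ≤ ω t) (hkm : k ≤ m) :
    AlmostAntitoneOn (fun t => ω t / t ^ m) S C := by
  intro t ht s hs hst
  have hs0 : 0 < s := hS hs
  have ht0 : 0 < t := hs0.trans_le hst
  have hsplit : ∀ x : ℝ, 0 < x → ω x / x ^ m = ω x / x ^ k * x ^ (k - m) := fun x hx => by
    rw [Real.rpow_sub hx]; field_simp
  calc ω t / t ^ m = ω t / t ^ k * t ^ (k - m) := hsplit t ht0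
    _ ≤ ω t / t ^ k * s ^ (k - m) :=
      mul_le_mul_of_nonneg_left (Real.rpow_le_rpow_of_nonpos hs0 hst (by linarith))
        (div_nonneg (hω t ht) (by positivity))
    _ ≤ C * (ω s / s ^ k) * s ^ (k - m) := by gcongr; exact h t ht s hs hst
    _ = C * (ω s / s ^ m) := by rw [hsplit s hs0]; ring

theorem rpow_le_of_almostAntitoneOn_div_rpow
    (h : AlmostAntitoneOn (fun t => ω t / t ^ m) (Ioc 0 δ) C) (hωδ : 0 < ω δ)
    {t : ℝ} (ht : t ∈ Ioc 0 δ) :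
    t ^ m ≤ C * δ ^ m / ω δ * ω t := by
  have hδ : δ ∈ Ioc 0 δ := ⟨ht.1.trans_le ht.2, le_rfl⟩
  have htm : 0 < t ^ m := Real.rpow_pos_of_pos ht.1 m
  have hδm : 0 < δ ^ m := Real.rpow_pos_of_pos hδ.1 m
  rw [div_mul_eq_mul_div, le_div_iff₀ hωδ]
  calc t ^ m * ω δ = t ^ m * δ ^ m * (ω δ / δ ^ m) := by field_simp
    _ ≤ t ^ m * δ ^ m * (C * (ω t / t ^ m)) := by gcongr; exact h δ hδ t ht ht.2
    _ = C * δ ^ m * ω t := by field_simp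

theorem integrableOn_Ioc_div_rpow {f : ℝ → ℝ} {a b : ℝ} (ha : 0 < a)
    (hf : ContinuousOn f (Icc a b)) (p : ℝ) :
    IntegrableOn (fun l => f l / l ^ p) (Ioc a b) := by
  refine (ContinuousOn.integrableOn_compact isCompact_Icc ?_).mono_set Ioc_subset_Icc_self
  exact hf.div (continuousOn_id.rpow_const fun l hl => Or.inl (ha.trans_le hl.1).ne')
    fun l hl => (Real.rpow_pos_of_pos (ha.trans_le hl.1) _).ne'

theorem setIntegral_sq_div_rpow_five_le (hk2 : k ≤ 2)
    (hcont : ContinuousOn ω (Icc 0 δ)) (hpos : ∀ t ∈ Ioc 0 δ, 0 < ω t)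
    (had : AlmostAntitoneOn (fun t => ω t / t ^ k) (Ioc 0 δ) C)
    {t : ℝ} (ht : t ∈ Ioc 0 δ) :
    ∫ l in Ioc t δ, ω l ^ 2 / l ^ (5:ℝ)
      ≤ C * (ω t / t ^ (4 - k)) * ∫ l in Ioc t δ, ω l / l ^ (1 + k) := by
  have had' : AlmostAntitoneOn (fun t => ω t / t ^ (4 - k)) (Ioc 0 δ) C :=
    had.div_rpow_of_le (fun _ hx => hx.1) (fun x hx => (hpos x hx).le) (by linarith)
  have hsub : Ioc t δ ⊆ Ioc 0 δ := Ioc_subset_Ioc_left ht.1.le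
  have hcont' : ContinuousOn ω (Icc t δ) := hcont.mono (Icc_subset_Icc_left ht.1.le)
  have hpointwise : ∀ l ∈ Ioc t δ,
      ω l ^ 2 / l ^ (5:ℝ) ≤ C * (ω t / t ^ (4 - k)) * (ω l / l ^ (1 + k)) := by
    intro l hl
    have hl0 : 0 < l := ht.1.trans hl.1
    calc ω l ^ 2 / l ^ (5:ℝ) = ω l / l ^ (4 - k) * (ω l / l ^ (1 + k)) := by
          rw [div_mul_div_comm, ← Real.rpow_add hl0]; norm_num [sq]
      _ ≤ C * (ω t / t ^ (4 - k)) * (ω l / l ^ (1 + k)) := by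
          gcongr
          · exact div_nonneg (hpos l (hsub hl)).le (by positivity)
          · exact had' l (hsub hl) t ht hl.1.le
  calc ∫ l in Ioc t δ, ω l ^ 2 / l ^ (5:ℝ)
      ≤ ∫ l in Ioc t δ, C * (ω t / t ^ (4 - k)) * (ω l / l ^ (1 + k)) :=
        setIntegral_mono_on (integrableOn_Ioc_div_rpow ht.1 (hcont'.pow 2) _)
          ((integrableOn_Ioc_div_rpow ht.1 hcont' _).const_mul _) measurableSet_Ioc hpointwise
    _ = C * (ω t / t ^ (4 - k)) * ∫ l in Ioc t δ, ω l / l ^ (1 + k) := integral_const_mul _ _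

theorem rpow_four_mul_setIntegral_le (hk2 : k ≤ 2) (hC : 0 ≤ C)
    (hcont : ContinuousOn ω (Icc 0 δ)) (hpos : ∀ t ∈ Ioc 0 δ, 0 < ω t)
    (had : AlmostAntitoneOn (fun t => ω t / t ^ k) (Ioc 0 δ) C)
    {t CZ : ℝ} (ht : t ∈ Ioc 0 δ)
    (hZ : ∫ s in Ioc t δ, ω s / s ^ (1 + k) ≤ CZ * (ω t / t ^ k)) :
    t ^ (4:ℝ) * ∫ l in Ioc t δ, ω l ^ 2 / l ^ (5:ℝ) ≤ C * CZ * ω t ^ 2 := by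
  have ht0 : 0 < t := ht.1
  have hωt : 0 < ω t := hpos t ht
  have htk : 0 < t ^ k := Real.rpow_pos_of_pos ht0 k
  have ht4k : 0 < t ^ (4 - k) := Real.rpow_pos_of_pos ht0 _
  have h4 : t ^ (4:ℝ) = t ^ (4 - k) * t ^ k := by rw [← Real.rpow_add ht0]; ring_nf
  calc t ^ (4:ℝ) * ∫ l in Ioc t δ, ω l ^ 2 / l ^ (5:ℝ)
      ≤ t ^ (4:ℝ) * (C * (ω t / t ^ (4 - k)) * (CZ * (ω t / t ^ k))) := by
        refine mul_le_mul_of_nonneg_left ?_ (by positivity)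
        exact (setIntegral_sq_div_rpow_five_le hk2 hcont hpos had ht).trans (by gcongr)
    _ = C * CZ * ω t ^ 2 := by rw [h4]; field_simp

theorem rpow_four_le_of_almostAntitoneOn (hk2 : k ≤ 2) (hpos : ∀ t ∈ Ioc 0 δ, 0 < ω t)
    (had : AlmostAntitoneOn (fun t => ω t / t ^ k) (Ioc 0 δ) C) {t : ℝ} (ht : t ∈ Ioc 0 δ) :
    t ^ (4:ℝ) ≤ (C * δ ^ (2:ℝ) / ω δ) ^ 2 * ω t ^ 2 := by
  have hsq := rpow_le_of_almostAntitoneOn_div_rpow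
    (had.div_rpow_of_le (fun _ hx => hx.1) (fun x hx => (hpos x hx).le) hk2)
    (hpos δ ⟨ht.1.trans_le ht.2, le_rfl⟩) ht
  calc t ^ (4:ℝ) = (t ^ (2:ℝ)) ^ 2 := by
        rw [← Real.rpow_natCast, ← Real.rpow_mul ht.1.le]; norm_num
    _ ≤ (C * δ ^ (2:ℝ) / ω δ * ω t) ^ 2 := by gcongr; exact (Real.rpow_pos_of_pos ht.1 _).le
    _ = (C * δ ^ (2:ℝ) / ω δ) ^ 2 * ω t ^ 2 := by ring

end

theorem I1_estimate_general
    (δ₀ k : ℝ) (hk2 : k ≤ 2)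
    (ω : ℝ → ℝ)
    (hcont : ContinuousOn ω (Icc 0 δ₀))
    (hpos : ∀ t ∈ Ioc (0:ℝ) δ₀, 0 < ω t)
    (had : ∃ C : ℝ, 1 ≤ C ∧ ∀ t ∈ Ioc (0:ℝ) δ₀, ∀ s ∈ Ioc (0:ℝ) δ₀,
      s ≤ t → ω t / t ^ k ≤ C * (ω s / s ^ k))
    (CZ : ℝ) (hCZ : 0 < CZ)
    (hZk : ∀ t ∈ Ioc (0:ℝ) δ₀,
      ∫ s in Ioc t δ₀, ω s / s ^ (1 + k) ≤ CZ * (ω t / t ^ k))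
    (C₄ C₆ : ℝ) (hC₄ : 0 ≤ C₄) (hC₆ : 0 ≤ C₆) :
    ∃ C₉ : ℝ, 0 < C₉ ∧ ∀ t ∈ Ioc (0:ℝ) δ₀,
      C₄ * t ^ (4:ℝ) * (∫ l in Ioc t δ₀, ω l ^ 2 / l ^ (5:ℝ))
        + C₆ * t ^ (4:ℝ) ≤ C₉ * ω t ^ 2 := by
  obtain ⟨C, hC, had⟩ := had
  replace had : AlmostAntitoneOn (fun t => ω t / t ^ k) (Ioc 0 δ₀) C := had
  set A := C * δ₀ ^ (2:ℝ) / ω δ₀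
  refine ⟨C₄ * (C * CZ) + C₆ * A ^ 2 + 1, by positivity, fun t ht => ?_⟩
  have hintegral := rpow_four_mul_setIntegral_le hk2 (by linarith) hcont hpos had ht (hZk t ht)
  have hpow := rpow_four_le_of_almostAntitoneOn hk2 hpos had ht
  calc C₄ * t ^ (4:ℝ) * (∫ l in Ioc t δ₀, ω l ^ 2 / l ^ (5:ℝ)) + C₆ * t ^ (4:ℝ)
      = C₄ * (t ^ (4:ℝ) * ∫ l in Ioc t δ₀, ω l ^ 2 / l ^ (5:ℝ)) + C₆ * t ^ (4:ℝ) := by ring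
    _ ≤ C₄ * (C * CZ * ω t ^ 2) + C₆ * (A ^ 2 * ω t ^ 2) := by gcongr
    _ ≤ (C₄ * (C * CZ) + C₆ * A ^ 2 + 1) * ω t ^ 2 := by linarith [sq_nonneg (ω t)]

/-- estimate of I₁ in the converse Titchmarsh theorem. If ω is a
k-th order modulus of continuity on [0,δ₀] with k ∈ (0,2] lying in the Zygmund
class 𝒵_k, then I₁(t) = C₄ t⁴ ∫_t^{δ₀} ω(λ)²/λ⁵ dλ + C₆ t⁴ ≤ C₉ ω(t)². -/
theorem I1_estimate
    (δ₀ k : ℝ) (hδ₀ : 0 < δ₀) (hk : 0 < k) (hk2 : k ≤ 2)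
    (ω : ℝ → ℝ)
    (hcont : ContinuousOn ω (Icc 0 δ₀))
    (hnonneg : ∀ t ∈ Icc (0:ℝ) δ₀, 0 ≤ ω t)
    (hzero : ω 0 = 0)
    (hpos : ∀ t ∈ Ioc (0:ℝ) δ₀, 0 < ω t)
    (hai : ∃ C : ℝ, 1 ≤ C ∧ ∀ t ∈ Icc (0:ℝ) δ₀, ∀ s ∈ Icc (0:ℝ) δ₀,
      t ≤ s → ω t ≤ C * ω s)
    (had : ∃ C : ℝ, 1 ≤ C ∧ ∀ t ∈ Ioc (0:ℝ) δ₀, ∀ s ∈ Ioc (0:ℝ) δ₀,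
      s ≤ t → ω t / t ^ k ≤ C * (ω s / s ^ k))
    (CZ : ℝ) (hCZ : 0 < CZ)
    (hZk : ∀ t ∈ Ioc (0:ℝ) δ₀,
      ∫ s in Ioc t δ₀, ω s / s ^ (1 + k) ≤ CZ * (ω t / t ^ k))
    (C₄ C₆ : ℝ) (hC₄ : 0 ≤ C₄) (hC₆ : 0 ≤ C₆) :
    ∃ C₉ : ℝ, 0 < C₉ ∧ ∀ t ∈ Ioc (0:ℝ) δ₀,
      C₄ * t ^ (4:ℝ) * (∫ l in Ioc t δ₀, ω l ^ 2 / l ^ (5:ℝ))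
        + C₆ * t ^ (4:ℝ) ≤ C₉ * ω t ^ 2 :=
  I1_estimate_general δ₀ k hk2 ω hcont hpos had CZ hCZ hZk C₄ C₆ hC₄ hC₆
end

section
/- (Two-sided Titchmarsh for the classical log-modulus, abstract form.) Let d ≥ 2, α ∈ (0,2), γ ∈ ℝ. Let g : ℝ₊ → [0,∞) be integrable, and let N(t) = (∫_0^∞ |1−φ(λ t)|² g(λ) w(λ) dλ)^{1/2} where w(λ) ≍ λ^{d−1} for λ > 1, w(λ) ≍ λ² for λ ≤ 1, and φ : ℝ₊ → ℝ satisfies |φ| ≤ 1, |1−φ(u)| ≤ C u² (here u = λt with the eigenvalue bound 4λ²+Q²/4 absorbed), and |1−φ(u)| ≥ c > 0 for u ≥ 1. Then N(t) ≤ C₁ t^α(log(1/t))^γ for small t if and only if ∫_{1/t}^∞ g(λ) dλ ≤ C₂ t^{2α+d−1}(log(1/t))^{2γ} for small t. -/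
open Set MeasureTheory ENNReal

/-!
For `λ > 1/t` the integrand of `N(t)²` dominates `cφ² c₁ t^{1-d} g(λ)`, which gives the tail
bound directly. Conversely, split `N(t)²` at `λ = 1/t`: above it `(1 - φ)² w ≲ λ^{d-1}`, below
it `(1 - φ)² w ≲ t⁴ max(1, λ)^{d+3}`. Cut both ranges into dyadic blocks and bound `∫ g` over a
block by the tail hypothesis at its left end. Since `d - 1 < 2α + d - 1 < d + 3`, the block
contributions decay geometrically away from `λ = 1/t`, as long as the factor `(log λ)^{2γ}`
changes by at most `(ratio of scales)^ε` for a small `ε > 0` (Potter bounds). Near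
`λ = 0` only `t⁴ ∫ g` remains, which is negligible because `α < 2`.
-/

theorem ENNReal.tsum_ofReal_mul_pow_le (A : ℝ) {r : ℝ} (hr₀ : 0 ≤ r) (hr₁ : r < 1) :
    ∑' k : ℕ, ENNReal.ofReal (A * r ^ k) ≤ ENNReal.ofReal (A * (1 - r)⁻¹) := by
  rcases le_or_gt A 0 with hA | hA
  · simp [ENNReal.ofReal_of_nonpos (mul_nonpos_of_nonpos_of_nonneg hA (pow_nonneg hr₀ _))]
  rw [← ENNReal.ofReal_tsum_of_nonneg (fun k => by positivity)
      ((summable_geometric_of_lt_one hr₀ hr₁).mul_left A),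
    tsum_mul_left, tsum_geometric_of_lt_one hr₀ hr₁]

section Lintegral

variable {α : Type*} [MeasurableSpace α] {μ : Measure α}

theorem setLIntegral_le_of_subset_iUnion_geometric {f : α → ℝ≥0∞} {s : Set α}
    {I : ℕ → Set α} (hs : s ⊆ ⋃ k, I k) {A r : ℝ} (hr₀ : 0 ≤ r) (hr₁ : r < 1)
    (hI : ∀ k, ∫⁻ x in I k, f x ∂μ ≤ ENNReal.ofReal (A * r ^ k)) :
    ∫⁻ x in s, f x ∂μ ≤ ENNReal.ofReal (A * (1 - r)⁻¹) :=
  calc ∫⁻ x in s, f x ∂μ ≤ ∫⁻ x in ⋃ k, I k, f x ∂μ := lintegral_mono_set hs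
    _ ≤ ∑' k, ∫⁻ x in I k, f x ∂μ := lintegral_iUnion_le _ _
    _ ≤ ∑' k : ℕ, ENNReal.ofReal (A * r ^ k) := ENNReal.tsum_le_tsum hI
    _ ≤ ENNReal.ofReal (A * (1 - r)⁻¹) := ENNReal.tsum_ofReal_mul_pow_le A hr₀ hr₁

theorem setLIntegral_ofReal_le_mul {s : Set α} (hs : MeasurableSet s) {F G : α → ℝ} {c R : ℝ}
    (hc : 0 ≤ c) (hFG : ∀ x ∈ s, F x ≤ c * G x)
    (hG : ∫⁻ x in s, ENNReal.ofReal (G x) ∂μ ≤ ENNReal.ofReal R) :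
    ∫⁻ x in s, ENNReal.ofReal (F x) ∂μ ≤ ENNReal.ofReal (c * R) :=
  calc ∫⁻ x in s, ENNReal.ofReal (F x) ∂μ
      ≤ ∫⁻ x in s, ENNReal.ofReal c * ENNReal.ofReal (G x) ∂μ :=
        setLIntegral_mono' hs fun x hx => by
          rw [← ENNReal.ofReal_mul hc]; exact ENNReal.ofReal_le_ofReal (hFG x hx)
    _ = ENNReal.ofReal c * ∫⁻ x in s, ENNReal.ofReal (G x) ∂μ :=
        lintegral_const_mul' _ _ ENNReal.ofReal_ne_top
    _ ≤ ENNReal.ofReal c * ENNReal.ofReal R := by gcongr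
    _ = ENNReal.ofReal (c * R) := (ENNReal.ofReal_mul hc).symm

end Lintegral

theorem Ioi_subset_iUnion_Ioc_two_pow_mul {B : ℝ} (hB : 0 < B) :
    Ioi B ⊆ ⋃ k : ℕ, Ioc (2 ^ k * B) (2 ^ (k + 1) * B) := by
  intro x (hx : B < x)
  obtain ⟨n, hn₁, hn₂⟩ := exists_mem_Ioc_zpow (div_pos (hB.trans hx) hB) one_lt_two
  have hn : 0 ≤ n := by
    by_contra! h
    have h1 : (2 : ℝ) ^ (n + 1) ≤ 1 := zpow_le_one_of_nonpos₀ one_le_two (by omega)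
    have h2 : 1 < x / B := (one_lt_div hB).2 hx
    linarith
  lift n to ℕ using hn
  rw [zpow_natCast, lt_div_iff₀ hB] at hn₁
  rw [show (n : ℤ) + 1 = ((n + 1 : ℕ) : ℤ) by push_cast; ring, zpow_natCast,
    div_le_iff₀ hB] at hn₂
  exact mem_iUnion.2 ⟨n, hn₁, hn₂⟩

theorem Ioc_zero_subset_iUnion_Ioc_div_two_pow (B : ℝ) :
    Ioc 0 B ⊆ ⋃ k : ℕ, Ioc (B / 2 ^ (k + 1)) (B / 2 ^ k) := by
  rintro x ⟨hx₀, hxB⟩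
  obtain ⟨n, hn₁, hn₂⟩ := exists_nat_pow_near ((one_le_div hx₀).2 hxB) one_lt_two
  rw [le_div_iff₀ hx₀, ← le_div_iff₀' (by positivity)] at hn₁
  rw [div_lt_iff₀ hx₀, ← div_lt_iff₀' (by positivity)] at hn₂
  exact mem_iUnion.2 ⟨n, hn₂, hn₁⟩

theorem two_pow_mul_rpow {B : ℝ} (hB : 0 ≤ B) (k : ℕ) (s : ℝ) :
    ((2 : ℝ) ^ k * B) ^ s = ((2 : ℝ) ^ s) ^ k * B ^ s := by
  rw [Real.mul_rpow (by positivity) hB, Real.rpow_pow_comm zero_le_two]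

theorem div_two_pow_rpow {B : ℝ} (hB : 0 ≤ B) (k : ℕ) (s : ℝ) :
    (B / (2 : ℝ) ^ k) ^ s = B ^ s / ((2 : ℝ) ^ s) ^ k := by
  rw [Real.div_rpow hB (by positivity), Real.rpow_pow_comm zero_le_two]

theorem one_add_rpow_le_mul_exp {a ε v : ℝ} (ha : 0 ≤ a) (hε : 0 < ε) (hv : 0 ≤ v) :
    (1 + v) ^ a ≤ max 1 (a / ε) ^ a * Real.exp (ε * v) := by
  rcases ha.eq_or_lt with rfl | ha
  · simpa using Real.one_le_exp (by positivity)
  set M := max 1 (a / ε)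
  have hlin : 1 + v ≤ M * (1 + ε * v / a) := by
    have h₁ : 1 ≤ M := le_max_left _ _
    have h₂ : 1 ≤ M * ε / a := by
      rw [le_div_iff₀ ha, one_mul, ← div_le_iff₀ hε]; exact le_max_right _ _
    have : v ≤ M * ε / a * v := le_mul_of_one_le_left hv h₂
    calc 1 + v ≤ M + M * ε / a * v := by linarith
      _ = M * (1 + ε * v / a) := by ring
  calc (1 + v) ^ a ≤ (M * (1 + ε * v / a)) ^ a := by gcongr
    _ = M ^ a * (1 + ε * v / a) ^ a := Real.mul_rpow (by positivity) (by positivity)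
    _ ≤ M ^ a * Real.exp (ε * v / a) ^ a := by
        gcongr
        linarith [Real.add_one_le_exp (ε * v / a)]
    _ = M ^ a * Real.exp (ε * v) := by
        rw [← Real.exp_mul, div_mul_cancel₀ _ ha.ne']

theorem log_div_log_rpow_le {x₀ x y ε : ℝ} (s : ℝ) (hx₀ : 1 < x₀) (hx : x₀ ≤ x) (hxy : x ≤ y)
    (hε : 0 < ε) :
    (Real.log y / Real.log x) ^ s ≤ max 1 (|s| / (ε * Real.log x₀)) ^ |s| * (y / x) ^ ε := by
  have hx0 : 0 < x := by linarith
  have hlogx₀ : 0 < Real.log x₀ := Real.log_pos hx₀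
  have hlogx : Real.log x₀ ≤ Real.log x := Real.log_le_log (by linarith) hx
  have hu : 0 ≤ Real.log (y / x) := Real.log_nonneg ((one_le_div hx0).2 hxy)
  have hR₁ : 1 ≤ Real.log y / Real.log x := by
    rw [one_le_div (by linarith)]; exact Real.log_le_log hx0 hxy
  have hR : Real.log y / Real.log x ≤ 1 + Real.log (y / x) / Real.log x₀ := by
    rw [Real.log_div (by linarith) hx0.ne', div_le_iff₀ (by linarith)]
    have : (Real.log y - Real.log x) / Real.log x₀ * Real.log x₀
        ≤ (Real.log y - Real.log x) / Real.log x₀ * Real.log x := by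
      gcongr
      rw [← Real.log_div (by linarith) hx0.ne']; positivity
    rw [div_mul_cancel₀ _ hlogx₀.ne'] at this
    linarith
  calc (Real.log y / Real.log x) ^ s ≤ (Real.log y / Real.log x) ^ |s| :=
        Real.rpow_le_rpow_of_exponent_le hR₁ (le_abs_self s)
    _ ≤ (1 + Real.log (y / x) / Real.log x₀) ^ |s| := by gcongr
    _ ≤ max 1 (|s| / (ε * Real.log x₀)) ^ |s|
          * Real.exp (ε * Real.log x₀ * (Real.log (y / x) / Real.log x₀)) :=
        one_add_rpow_le_mul_exp (abs_nonneg s) (by positivity) (by positivity)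
    _ = max 1 (|s| / (ε * Real.log x₀)) ^ |s| * (y / x) ^ ε := by
        field_simp
        rw [Real.rpow_def_of_pos (div_pos (hx0.trans_le hxy) hx0), mul_comm]

/-- Potter bounds on `[x₀, ∞)`, as satisfied by slowly varying functions such as `(log x) ^ q`. -/
structure IsPotterBound (ψ : ℝ → ℝ) (x₀ ε C : ℝ) : Prop where
  pos : ∀ x, x₀ ≤ x → 0 < ψ x
  right_le : ∀ x y, x₀ ≤ x → x ≤ y → ψ y ≤ C * (y / x) ^ ε * ψ x
  left_le : ∀ x y, x₀ ≤ x → x ≤ y → ψ x ≤ C * (y / x) ^ ε * ψ y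

theorem isPotterBound_log_rpow (q : ℝ) {x₀ ε : ℝ} (hx₀ : 1 < x₀) (hε : 0 < ε) :
    ∃ C, IsPotterBound (fun x => Real.log x ^ q) x₀ ε C := by
  refine ⟨max 1 (|q| / (ε * Real.log x₀)) ^ |q|, fun x hx => ?_, fun x y hx hxy => ?_,
    fun x y hx hxy => ?_⟩
  · exact Real.rpow_pos_of_pos (Real.log_pos (by linarith)) q
  all_goals
    have hlogx : 0 < Real.log x := Real.log_pos (by linarith)
    have hlogy₀ : 0 < Real.log y := Real.log_pos (by linarith)
    have hR₀ : 0 < Real.log y / Real.log x := div_pos hlogy₀ hlogx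
    have hlogy : Real.log y = Real.log y / Real.log x * Real.log x := by field_simp
  · have := log_div_log_rpow_le q hx₀ hx hxy hε
    conv_lhs => rw [hlogy]
    rw [Real.mul_rpow hR₀.le hlogx.le]
    gcongr
  · have := log_div_log_rpow_le (-q) hx₀ hx hxy hε
    rw [abs_neg] at this
    calc Real.log x ^ q
        = (Real.log y / Real.log x) ^ (-q) * ((Real.log y / Real.log x) ^ q * Real.log x ^ q) := by
          rw [← mul_assoc, ← Real.rpow_add hR₀, neg_add_cancel, Real.rpow_zero, one_mul]
      _ ≤ _ := by
          rw [← Real.mul_rpow hR₀.le hlogx.le, ← hlogy]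
          exact mul_le_mul_of_nonneg_right this (Real.rpow_pos_of_pos hlogy₀ q).le

namespace IsPotterBound

variable {ψ : ℝ → ℝ} {x₀ ε C : ℝ}

theorem one_le_const (h : IsPotterBound ψ x₀ ε C) (hx₀ : 0 < x₀) : 1 ≤ C := by
  have h₁ := h.right_le x₀ x₀ le_rfl le_rfl
  rw [div_self hx₀.ne', Real.one_rpow, mul_one] at h₁
  exact (le_mul_iff_one_le_left (h.pos x₀ le_rfl)).1 h₁

theorem rpow_mul_le (h : IsPotterBound ψ x₀ ε C) (hx₀ : 0 < x₀) {s B : ℝ} (hs : ε ≤ s)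
    (hB : x₀ ≤ B) : x₀ ^ s * ψ x₀ ≤ C * (B ^ s * ψ B) := by
  have hC : 0 ≤ C := zero_le_one.trans (h.one_le_const hx₀)
  have hψB := (h.pos B hB).le
  calc x₀ ^ s * ψ x₀ ≤ x₀ ^ s * (C * (B / x₀) ^ ε * ψ B) := by
        gcongr; exact h.left_le x₀ B le_rfl hB
    _ ≤ x₀ ^ s * (C * (B / x₀) ^ s * ψ B) := by
        gcongr x₀ ^ s * (C * ?_ * ψ B)
        exact Real.rpow_le_rpow_of_exponent_le ((one_le_div hx₀).2 hB) hs
    _ = C * (B ^ s * ψ B) := by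
        rw [Real.div_rpow (hx₀.le.trans hB) hx₀.le]
        field_simp

end IsPotterBound

def HasTailBound (g ψ : ℝ → ℝ) (x₀ A β : ℝ) : Prop :=
  ∀ x, x₀ ≤ x → ∫⁻ l in Ioi x, ENNReal.ofReal (g l) ≤ ENNReal.ofReal (A * x ^ (-β) * ψ x)

theorem hasTailBound_of_lintegral_Ioi_one_div_le {g : ℝ → ℝ} {t₁ C₂ β q : ℝ}
    (H : ∀ t : ℝ, 0 < t → t < t₁ →
      ∫⁻ l in Ioi (1 / t), ENNReal.ofReal (g l)
        ≤ ENNReal.ofReal (C₂ * t ^ β * Real.log (1 / t) ^ q))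
    (ht₁ : 0 < t₁) {x₀ : ℝ} (hx₀ : t₁⁻¹ < x₀) :
    HasTailBound g (fun x => Real.log x ^ q) x₀ C₂ β := by
  intro x hx
  have hx' : 0 < x := (inv_pos.2 ht₁).trans (hx₀.trans_le hx)
  have := H x⁻¹ (inv_pos.2 hx') (inv_lt_of_inv_lt₀ ht₁ (hx₀.trans_le hx))
  rwa [one_div, inv_inv, Real.inv_rpow hx'.le, ← Real.rpow_neg hx'.le] at this

section TailMoments

variable {g ψ : ℝ → ℝ} {x₀ A β ε C p : ℝ}

theorem exists_setLIntegral_Ioi_rpow_mul_le (hg : ∀ l, 0 ≤ g l) (hx₀ : 0 < x₀) (hp : 0 ≤ p)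
    (hε : ε < β - p) (hψ : IsPotterBound ψ x₀ ε C) (hA : 0 < A)
    (hT : HasTailBound g ψ x₀ A β) :
    ∃ K, 0 < K ∧ ∀ B, x₀ ≤ B →
      ∫⁻ l in Ioi B, ENNReal.ofReal (l ^ p * g l) ≤ ENNReal.ofReal (K * B ^ (p - β) * ψ B) := by
  set r : ℝ := 2 ^ (p - β + ε) with hr_def
  have hr : r < 1 := Real.rpow_lt_one_of_one_lt_of_neg one_lt_two (by linarith)
  have hC : 0 < C := zero_lt_one.trans_le (hψ.one_le_const hx₀)
  have hr' : 0 < (1 - r)⁻¹ := inv_pos.2 (by linarith)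
  refine ⟨2 ^ p * A * C * (1 - r)⁻¹, by positivity, fun B hB => ?_⟩
  have hB₀ : 0 < B := hx₀.trans_le hB
  refine (setLIntegral_le_of_subset_iUnion_geometric (Ioi_subset_iUnion_Ioc_two_pow_mul hB₀)
    (A := 2 ^ p * A * C * B ^ (p - β) * ψ B) (by positivity) hr fun k => ?_).trans_eq
    (congrArg ENNReal.ofReal (by ring))
  have hk : B ≤ 2 ^ k * B := le_mul_of_one_le_left hB₀.le (one_le_pow₀ one_le_two)
  have hpow : ((2:ℝ) ^ (k + 1) * B) ^ p * ((2:ℝ) ^ k * B) ^ (-β) * ((2:ℝ) ^ k * B / B) ^ ε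
      = 2 ^ p * B ^ (p - β) * r ^ k := by
    rw [hr_def, mul_div_cancel_right₀ _ hB₀.ne', two_pow_mul_rpow hB₀.le, two_pow_mul_rpow hB₀.le,
      ← Real.rpow_pow_comm zero_le_two, Real.rpow_add two_pos, Real.rpow_sub two_pos,
      Real.rpow_sub hB₀, Real.rpow_neg hB₀.le, Real.rpow_neg zero_le_two]
    field_simp
    ring
  refine (setLIntegral_ofReal_le_mul measurableSet_Ioc (c := ((2:ℝ) ^ (k + 1) * B) ^ p)
    (by positivity) (fun l hl => ?_)
    ((lintegral_mono_set Ioc_subset_Ioi_self).trans (hT _ (hB.trans hk)))).trans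
    (ENNReal.ofReal_le_ofReal ?_)
  · exact mul_le_mul_of_nonneg_right
      (Real.rpow_le_rpow (hB₀.trans_le hk |>.trans hl.1).le hl.2 hp) (hg l)
  · calc ((2:ℝ) ^ (k + 1) * B) ^ p * (A * ((2:ℝ) ^ k * B) ^ (-β) * ψ (2 ^ k * B))
        ≤ ((2:ℝ) ^ (k + 1) * B) ^ p
            * (A * ((2:ℝ) ^ k * B) ^ (-β) * (C * ((2:ℝ) ^ k * B / B) ^ ε * ψ B)) := by
          gcongr
          exact hψ.right_le B _ hB hk
      _ = 2 ^ p * A * C * B ^ (p - β) * ψ B * r ^ k := by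
          linear_combination (A * C * ψ B) * hpow

theorem exists_setLIntegral_Ioc_rpow_mul_le (hg : ∀ l, 0 ≤ g l) (hx₀ : 0 < x₀) (hβ : 0 ≤ β)
    (hε₀ : 0 ≤ ε) (hε : ε < p - β) (hψ : IsPotterBound ψ x₀ ε C) (hA : 0 < A)
    (hT : HasTailBound g ψ x₀ A β) :
    ∃ K, 0 < K ∧ ∀ B, x₀ ≤ B →
      ∫⁻ l in Ioc x₀ B, ENNReal.ofReal (l ^ p * g l) ≤ ENNReal.ofReal (K * B ^ (p - β) * ψ B) := by
  set r : ℝ := 2 ^ (β + ε - p) with hr_def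
  have hr : r < 1 := Real.rpow_lt_one_of_one_lt_of_neg one_lt_two (by linarith)
  have hC : 0 < C := zero_lt_one.trans_le (hψ.one_le_const hx₀)
  have hr' : 0 < (1 - r)⁻¹ := inv_pos.2 (by linarith)
  refine ⟨2 ^ (β + ε) * A * C * (1 - r)⁻¹, by positivity, fun B hB => ?_⟩
  have hB₀ : 0 < B := hx₀.trans_le hB
  have hcover : Ioc x₀ B ⊆ ⋃ k : ℕ, Ioc (B / 2 ^ (k + 1)) (B / 2 ^ k) ∩ Ioi x₀ := fun l hl =>
    have ⟨k, hk⟩ := mem_iUnion.1 (Ioc_zero_subset_iUnion_Ioc_div_two_pow B ⟨hx₀.trans hl.1, hl.2⟩)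
    mem_iUnion.2 ⟨k, hk, hl.1⟩
  refine (setLIntegral_le_of_subset_iUnion_geometric hcover
    (A := 2 ^ (β + ε) * A * C * B ^ (p - β) * ψ B) (by positivity) hr fun k => ?_).trans_eq
    (congrArg ENNReal.ofReal (by ring))
  -- The tail hypothesis is only available above `x₀`, which may cut into the block.
  set x := max x₀ (B / 2 ^ (k + 1))
  have hx : 0 < x := hx₀.trans_le (le_max_left _ _)
  have hxB : x ≤ B := max_le hB (div_le_self hB₀.le (one_le_pow₀ one_le_two))
  have hBx : B / x ≤ 2 ^ (k + 1) :=
    (div_le_iff₀ hx).2 <| (div_le_iff₀' (by positivity)).1 <| le_max_right _ _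
  have hpow : (B / 2 ^ k) ^ p * (B / 2 ^ (k + 1)) ^ (-β) * ((2:ℝ) ^ (k + 1)) ^ ε
      = 2 ^ (β + ε) * B ^ (p - β) * r ^ k := by
    rw [hr_def, div_two_pow_rpow hB₀.le, div_two_pow_rpow hB₀.le,
      ← Real.rpow_pow_comm zero_le_two, Real.rpow_add two_pos, Real.rpow_sub two_pos,
      Real.rpow_add two_pos, Real.rpow_sub hB₀, Real.rpow_neg hB₀.le, Real.rpow_neg zero_le_two,
      div_pow, inv_pow, mul_pow]
    field_simp
    ring
  refine (setLIntegral_ofReal_le_mul (measurableSet_Ioc.inter measurableSet_Ioi)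
    (c := (B / 2 ^ k) ^ p) (by positivity) (fun l hl => ?_)
    ((lintegral_mono_set fun l hl => max_lt hl.2 hl.1.1).trans
      (hT x (le_max_left _ _)))).trans (ENNReal.ofReal_le_ofReal ?_)
  · exact mul_le_mul_of_nonneg_right
      (Real.rpow_le_rpow (hx₀.trans hl.2).le hl.1.2 (by linarith)) (hg l)
  · calc (B / 2 ^ k) ^ p * (A * x ^ (-β) * ψ x)
        ≤ (B / 2 ^ k) ^ p * (A * (B / 2 ^ (k + 1)) ^ (-β) * (C * ((2:ℝ) ^ (k + 1)) ^ ε * ψ B)) := by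
          have hψx : ψ x ≤ C * ((2:ℝ) ^ (k + 1)) ^ ε * ψ B :=
            (hψ.left_le x B (le_max_left _ _) hxB).trans <| mul_le_mul_of_nonneg_right
              (mul_le_mul_of_nonneg_left (Real.rpow_le_rpow (by positivity) hBx hε₀) hC.le)
              (hψ.pos B hB).le
          have hx_rpow : x ^ (-β) ≤ (B / 2 ^ (k + 1)) ^ (-β) :=
            Real.rpow_le_rpow_of_nonpos (by positivity) (le_max_right _ _) (by linarith)
          gcongr ?_ * (A * ?_ * ?_)
          exact (hψ.pos x (le_max_left _ _)).le
      _ = 2 ^ (β + ε) * A * C * B ^ (p - β) * ψ B * r ^ k := by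
          linear_combination (A * C * ψ B) * hpow

theorem exists_setLIntegral_Ioc_zero_max_rpow_mul_le (hg : ∀ l, 0 ≤ g l) (hx₀ : 1 ≤ x₀)
    (hβ : 0 ≤ β) (hε₀ : 0 ≤ ε) (hε : ε < p - β) (hψ : IsPotterBound ψ x₀ ε C) (hA : 0 < A)
    (hT : HasTailBound g ψ x₀ A β)
    (hg_fin : ∫⁻ l in Ioc 0 x₀, ENNReal.ofReal (g l) ≠ ∞) :
    ∃ K, 0 < K ∧ ∀ B, x₀ ≤ B →
      ∫⁻ l in Ioc 0 B, ENNReal.ofReal (max 1 l ^ p * g l)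
        ≤ ENNReal.ofReal (K * B ^ (p - β) * ψ B) := by
  have hx₀' : 0 < x₀ := zero_lt_one.trans_le hx₀
  obtain ⟨K, hK, hmid⟩ := exists_setLIntegral_Ioc_rpow_mul_le hg hx₀' hβ hε₀ hε hψ hA hT
  set G := (∫⁻ l in Ioc 0 x₀, ENNReal.ofReal (g l)).toReal
  have hG : 0 ≤ G := ENNReal.toReal_nonneg
  have hψx₀ := hψ.pos x₀ le_rfl
  have hC : 0 < C := zero_lt_one.trans_le (hψ.one_le_const hx₀')
  refine ⟨x₀ ^ β * G * C / ψ x₀ + K, by positivity, fun B hB => ?_⟩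
  have hψB := hψ.pos B hB
  have hB₀ : 0 < B := hx₀'.trans_le hB
  have hlow : ∫⁻ l in Ioc 0 x₀, ENNReal.ofReal (max 1 l ^ p * g l)
      ≤ ENNReal.ofReal (x₀ ^ β * G * C / ψ x₀ * B ^ (p - β) * ψ B) := by
    refine (setLIntegral_ofReal_le_mul measurableSet_Ioc (c := x₀ ^ p) (by positivity)
      (fun l hl => ?_) (ENNReal.ofReal_toReal hg_fin).ge).trans (ENNReal.ofReal_le_ofReal ?_)
    · exact mul_le_mul_of_nonneg_right
        (Real.rpow_le_rpow (by positivity) (max_le hx₀ hl.2) (by linarith)) (hg l)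
    · have h := hψ.rpow_mul_le hx₀' hε.le hB
      calc x₀ ^ p * G = x₀ ^ β * G / ψ x₀ * (x₀ ^ (p - β) * ψ x₀) := by
            rw [Real.rpow_sub hx₀']; field_simp
        _ ≤ x₀ ^ β * G / ψ x₀ * (C * (B ^ (p - β) * ψ B)) := by gcongr
        _ = x₀ ^ β * G * C / ψ x₀ * B ^ (p - β) * ψ B := by ring
  have hhigh : ∫⁻ l in Ioc x₀ B, ENNReal.ofReal (max 1 l ^ p * g l)
      ≤ ENNReal.ofReal (K * B ^ (p - β) * ψ B) := by
    rw [setLIntegral_congr_fun measurableSet_Ioc fun l hl => by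
      rw [max_eq_right (hx₀.trans hl.1.le)]]
    exact hmid B hB
  calc ∫⁻ l in Ioc 0 B, ENNReal.ofReal (max 1 l ^ p * g l)
      ≤ ∫⁻ l in Ioc 0 x₀ ∪ Ioc x₀ B, ENNReal.ofReal (max 1 l ^ p * g l) :=
        lintegral_mono_set Ioc_subset_Ioc_union_Ioc
    _ ≤ ENNReal.ofReal (x₀ ^ β * G * C / ψ x₀ * B ^ (p - β) * ψ B)
          + ENNReal.ofReal (K * B ^ (p - β) * ψ B) :=
        (lintegral_union_le _ _ _).trans (add_le_add hlow hhigh)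
    _ = ENNReal.ofReal ((x₀ ^ β * G * C / ψ x₀ + K) * B ^ (p - β) * ψ B) := by
        rw [← ENNReal.ofReal_add (by positivity) (by positivity)]; congr 1; ring

end TailMoments

theorem sq_rpow_mul_rpow {x y : ℝ} (hx : 0 ≤ x) (hy : 0 ≤ y) (a b : ℝ) :
    (x ^ a * y ^ b) ^ 2 = x ^ (2 * a) * y ^ (2 * b) := by
  rw [mul_pow, ← Real.rpow_mul_natCast hx, ← Real.rpow_mul_natCast hy]
  norm_num [mul_comm]

section Multiplier

variable {d c₁ c₂ cφ Cφ : ℝ} {w φ : ℝ → ℝ}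

theorem one_sub_sq_mul_le_of_near (hc₂ : 0 ≤ c₂)
    (hwlow : ∀ l, 0 < l → l ≤ 1 → w l ≤ c₂ * l ^ 2)
    (hwhigh : ∀ l, 1 < l → w l ≤ c₂ * l ^ (d - 1))
    (hφnear : ∀ u, 0 ≤ u → |1 - φ u| ≤ Cφ * u ^ 2) {l t : ℝ} (hl : 0 < l) (ht : 0 ≤ t) :
    (1 - φ (l * t)) ^ 2 * w l ≤ c₂ * Cφ ^ 2 * t ^ 4 * max 1 l ^ (d + 3) := by
  have hφ : (1 - φ (l * t)) ^ 2 ≤ Cφ ^ 2 * (l * t) ^ 4 := by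
    have := pow_le_pow_left₀ (abs_nonneg _) (hφnear _ (mul_nonneg hl.le ht)) 2
    rw [sq_abs] at this
    linear_combination this
  rcases le_or_gt l 1 with hl₁ | hl₁
  · rw [max_eq_left hl₁, Real.one_rpow, mul_one]
    calc (1 - φ (l * t)) ^ 2 * w l ≤ Cφ ^ 2 * (l * t) ^ 4 * (c₂ * l ^ 2) :=
          (mul_le_mul_of_nonneg_left (hwlow l hl hl₁) (sq_nonneg _)).trans
            (mul_le_mul_of_nonneg_right hφ (by positivity))
      _ = c₂ * Cφ ^ 2 * t ^ 4 * l ^ 6 := by ring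
      _ ≤ c₂ * Cφ ^ 2 * t ^ 4 := mul_le_of_le_one_right (by positivity) (pow_le_one₀ hl.le hl₁)
  · rw [max_eq_right hl₁.le, show d + 3 = 4 + (d - 1) by ring, Real.rpow_add hl,
      show (4 : ℝ) = (4 : ℕ) by norm_num, Real.rpow_natCast]
    calc (1 - φ (l * t)) ^ 2 * w l ≤ Cφ ^ 2 * (l * t) ^ 4 * (c₂ * l ^ (d - 1)) :=
          (mul_le_mul_of_nonneg_left (hwhigh l hl₁) (sq_nonneg _)).trans
            (mul_le_mul_of_nonneg_right hφ (by positivity))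
      _ = c₂ * Cφ ^ 2 * t ^ 4 * (l ^ 4 * l ^ (d - 1)) := by ring

theorem one_sub_sq_mul_le_of_bdd (hc₂ : 0 ≤ c₂) (hwhigh : ∀ l, 1 < l → w l ≤ c₂ * l ^ (d - 1))
    (hφbdd : ∀ u, 0 ≤ u → |φ u| ≤ 1) {l t : ℝ} (hl : 1 < l) (ht : 0 ≤ t) :
    (1 - φ (l * t)) ^ 2 * w l ≤ 4 * c₂ * l ^ (d - 1) := by
  have hφ : (1 - φ (l * t)) ^ 2 ≤ 4 := by
    nlinarith [abs_le.1 (hφbdd _ (mul_nonneg (zero_le_one.trans hl.le) ht))]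
  calc (1 - φ (l * t)) ^ 2 * w l ≤ 4 * (c₂ * l ^ (d - 1)) :=
        (mul_le_mul_of_nonneg_left (hwhigh l hl) (sq_nonneg _)).trans
          (mul_le_mul_of_nonneg_right hφ (by positivity))
    _ = 4 * c₂ * l ^ (d - 1) := by ring

theorem le_mul_one_sub_sq_mul_of_far (hd : 1 ≤ d) (hc₁ : 0 < c₁) (hcφ : 0 < cφ)
    (hwhigh : ∀ l, 1 < l → c₁ * l ^ (d - 1) ≤ w l) (hφfar : ∀ u, 1 ≤ u → cφ ≤ |1 - φ u|)
    {g l t : ℝ} (hg : 0 ≤ g) (ht : 0 < t) (ht₁ : t < 1) (hl : 1 / t < l) :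
    g ≤ t ^ (d - 1) / (cφ ^ 2 * c₁) * ((1 - φ (l * t)) ^ 2 * (g * w l)) := by
  have hl₁ : 1 < l := ((one_lt_div ht).2 ht₁).trans hl
  have hφ : cφ ^ 2 ≤ (1 - φ (l * t)) ^ 2 := by
    have := pow_le_pow_left₀ hcφ.le (hφfar _ ((div_lt_iff₀ ht).1 hl).le) 2
    rwa [sq_abs] at this
  have hw : c₁ * (1 / t) ^ (d - 1) ≤ w l :=
    (mul_le_mul_of_nonneg_left (Real.rpow_le_rpow (by positivity) hl.le (by linarith))
      hc₁.le).trans (hwhigh l hl₁)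
  calc g = t ^ (d - 1) / (cφ ^ 2 * c₁) * ((cφ ^ 2 * (c₁ * (1 / t) ^ (d - 1))) * g) := by
        rw [Real.div_rpow zero_le_one ht.le, Real.one_rpow]
        field_simp
    _ ≤ t ^ (d - 1) / (cφ ^ 2 * c₁) * ((1 - φ (l * t)) ^ 2 * w l * g) := by
        gcongr
    _ = t ^ (d - 1) / (cφ ^ 2 * c₁) * ((1 - φ (l * t)) ^ 2 * (g * w l)) := by ring

theorem exists_lintegral_one_sub_sq_mul_le {α : ℝ} {g ψ : ℝ → ℝ} {x₀ A : ℝ}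
    (hd : 1 ≤ d) (hα : 0 < α) (hα₂ : α < 2) (hx₀ : 1 ≤ x₀)
    (hψ : ∀ ε, 0 < ε → ∃ C, IsPotterBound ψ x₀ ε C) (hA : 0 < A) (hg : ∀ l, 0 ≤ g l)
    (hT : HasTailBound g ψ x₀ A (2 * α + d - 1))
    (hg_fin : ∫⁻ l in Ioc 0 x₀, ENNReal.ofReal (g l) ≠ ∞) (hc₂ : 0 < c₂)
    (hwlow : ∀ l, 0 < l → l ≤ 1 → w l ≤ c₂ * l ^ 2)
    (hwhigh : ∀ l, 1 < l → w l ≤ c₂ * l ^ (d - 1))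
    (hφbdd : ∀ u, 0 ≤ u → |φ u| ≤ 1) (hφnear : ∀ u, 0 ≤ u → |1 - φ u| ≤ Cφ * u ^ 2) :
    ∃ K, 0 < K ∧ ∀ t, 0 < t → t ≤ x₀⁻¹ →
      ∫⁻ l in Ioi 0, ENNReal.ofReal ((1 - φ (l * t)) ^ 2 * (g l * w l))
        ≤ ENNReal.ofReal (K * t ^ (2 * α) * ψ (1 / t)) := by
  have hx₀' : 0 < x₀ := zero_lt_one.trans_le hx₀
  obtain ⟨C, hψ⟩ := hψ (min α (2 - α)) (lt_min hα (by linarith))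
  have hεα := min_le_left α (2 - α)
  have hε₂ := min_le_right α (2 - α)
  obtain ⟨Ka, hKa, hIoi⟩ := exists_setLIntegral_Ioi_rpow_mul_le (p := d - 1) hg hx₀'
    (by linarith) (by linarith) hψ hA hT
  obtain ⟨Kb, hKb, hIoc⟩ := exists_setLIntegral_Ioc_zero_max_rpow_mul_le (p := d + 3) hg hx₀
    (by linarith) (le_min hα.le (by linarith)) (by linarith) hψ hA hT hg_fin
  refine ⟨c₂ * Cφ ^ 2 * Kb + 4 * c₂ * Ka, by positivity, fun t ht htx => ?_⟩
  set B := 1 / t with hB_def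
  have hB : x₀ ≤ B := (le_one_div hx₀' ht).2 (by rwa [one_div])
  have hB₀ : 0 < B := by positivity
  have hψB := (hψ.pos B hB).le
  calc ∫⁻ l in Ioi 0, ENNReal.ofReal ((1 - φ (l * t)) ^ 2 * (g l * w l))
      ≤ (∫⁻ l in Ioc 0 B, ENNReal.ofReal ((1 - φ (l * t)) ^ 2 * (g l * w l)))
        + ∫⁻ l in Ioi B, ENNReal.ofReal ((1 - φ (l * t)) ^ 2 * (g l * w l)) :=
        (lintegral_mono_set (Ioc_union_Ioi_eq_Ioi hB₀.le).ge).trans (lintegral_union_le _ _ _)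
    _ ≤ ENNReal.ofReal (c₂ * Cφ ^ 2 * t ^ 4 * (Kb * B ^ (d + 3 - (2 * α + d - 1)) * ψ B))
        + ENNReal.ofReal (4 * c₂ * (Ka * B ^ (d - 1 - (2 * α + d - 1)) * ψ B)) := by
        refine add_le_add ?_ ?_
        · refine setLIntegral_ofReal_le_mul measurableSet_Ioc (by positivity) (fun l hl => ?_)
            (hIoc B hB)
          have := mul_le_mul_of_nonneg_right
            (one_sub_sq_mul_le_of_near hc₂.le hwlow hwhigh hφnear hl.1 ht.le) (hg l)
          linear_combination this
        · refine setLIntegral_ofReal_le_mul measurableSet_Ioi (by positivity) (fun l hl => ?_)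
            (hIoi B hB)
          have := mul_le_mul_of_nonneg_right (one_sub_sq_mul_le_of_bdd hc₂.le hwhigh hφbdd
            ((hx₀.trans hB).trans_lt hl) ht.le) (hg l)
          linear_combination this
    _ = ENNReal.ofReal ((c₂ * Cφ ^ 2 * Kb + 4 * c₂ * Ka) * t ^ (2 * α) * ψ (1 / t)) := by
        have hB_rpow (s : ℝ) : B ^ s = t ^ (-s) := by
          rw [hB_def, one_div, Real.inv_rpow ht.le, Real.rpow_neg ht.le]
        have e₁ : t ^ 4 * B ^ (d + 3 - (2 * α + d - 1)) = t ^ (2 * α) := by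
          rw [hB_rpow, ← Real.rpow_natCast, ← Real.rpow_add ht]; ring_nf
        have e₂ : B ^ (d - 1 - (2 * α + d - 1)) = t ^ (2 * α) := by
          rw [hB_rpow]; ring_nf
        rw [← ENNReal.ofReal_add (by positivity) (by positivity)]
        congr 1
        linear_combination (c₂ * Cφ ^ 2 * Kb * ψ B) * e₁ + (4 * c₂ * Ka * ψ B) * e₂

end Multiplier

theorem abstract_titchmarsh_iff_general
    (d α γ : ℝ) (hd : 2 ≤ d) (hα : 0 < α) (hα2 : α < 2)
    (g : ℝ → ℝ) (hgnonneg : ∀ l, 0 ≤ g l)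
    (hgint : ∫⁻ l in Ioi (0:ℝ), ENNReal.ofReal (g l) < ⊤)
    (w : ℝ → ℝ)
    (c₁ c₂ : ℝ) (hc₁ : 0 < c₁) (hc₂ : 0 < c₂)
    (hwhigh : ∀ l : ℝ, 1 < l →
      c₁ * l ^ (d-1) ≤ w l ∧ w l ≤ c₂ * l ^ (d-1))
    (hwlow : ∀ l : ℝ, 0 < l → l ≤ 1 →
      c₁ * l ^ 2 ≤ w l ∧ w l ≤ c₂ * l ^ 2)
    (φ : ℝ → ℝ)
    (hφbdd : ∀ u : ℝ, 0 ≤ u → |φ u| ≤ 1)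
    (Cφ : ℝ)
    (hφnear : ∀ u : ℝ, 0 ≤ u → |1 - φ u| ≤ Cφ * u ^ 2)
    (cφ : ℝ) (hcφ : 0 < cφ)
    (hφfar : ∀ u : ℝ, 1 ≤ u → cφ ≤ |1 - φ u|) :
    (∃ C₁ : ℝ, 0 < C₁ ∧ ∃ t₀ : ℝ, 0 < t₀ ∧ t₀ < 1 ∧
        ∀ t : ℝ, 0 < t → t < t₀ →
          ∫⁻ l in Ioi (0:ℝ),
              ENNReal.ofReal ((1 - φ (l * t)) ^ 2 * (g l * w l))
            ≤ ENNReal.ofReal ((C₁ * (t ^ α * Real.log (1/t) ^ γ)) ^ 2))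
      ↔
    (∃ C₂ : ℝ, 0 < C₂ ∧ ∃ t₁ : ℝ, 0 < t₁ ∧ t₁ < 1 ∧
        ∀ t : ℝ, 0 < t → t < t₁ →
          ∫⁻ l in Ioi (1/t), ENNReal.ofReal (g l)
            ≤ ENNReal.ofReal
                (C₂ * t ^ (2*α + d - 1) * Real.log (1/t) ^ (2*γ))) := by
  constructor
  · rintro ⟨C₁, hC₁, t₀, ht₀, ht₀₁, H⟩
    refine ⟨C₁ ^ 2 / (cφ ^ 2 * c₁), by positivity, t₀, ht₀, ht₀₁, fun t ht htt₀ => ?_⟩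
    have ht₁ := htt₀.trans ht₀₁
    have hL : 0 < Real.log (1 / t) := Real.log_pos ((one_lt_div ht).2 ht₁)
    refine (setLIntegral_ofReal_le_mul measurableSet_Ioi (by positivity)
      (fun l hl => le_mul_one_sub_sq_mul_of_far (by linarith) hc₁ hcφ
        (fun l hl => (hwhigh l hl).1) hφfar (hgnonneg l) ht ht₁ hl)
      ((lintegral_mono_set (Ioi_subset_Ioi (by positivity))).trans (H t ht htt₀))).trans_eq
      (congrArg ENNReal.ofReal ?_)
    rw [mul_pow, sq_rpow_mul_rpow ht.le hL.le, show 2 * α + d - 1 = (d - 1) + 2 * α by ring,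
      Real.rpow_add ht]
    ring
  · rintro ⟨C₂, hC₂, t₁, ht₁, ht₁₁, H⟩
    have hx₀ : 1 ≤ 2 / t₁ := by rw [le_div_iff₀ ht₁]; linarith
    obtain ⟨K, hK, hbound⟩ := exists_lintegral_one_sub_sq_mul_le (by linarith) hα hα2 hx₀
      (fun ε hε => isPotterBound_log_rpow (2 * γ) (by rw [lt_div_iff₀ ht₁]; linarith) hε)
      hC₂ hgnonneg
      (hasTailBound_of_lintegral_Ioi_one_div_le H ht₁ (by rw [inv_eq_one_div]; gcongr; norm_num))
      ((lintegral_mono_set Ioc_subset_Ioi_self).trans_lt hgint).ne hc₂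
      (fun l hl hl₁ => (hwlow l hl hl₁).2) (fun l hl => (hwhigh l hl).2) hφbdd hφnear
    refine ⟨√K, Real.sqrt_pos.2 hK, t₁ / 2, by positivity, by linarith, fun t ht htt => ?_⟩
    have hL : 0 < Real.log (1 / t) := Real.log_pos ((one_lt_div ht).2 (by linarith))
    refine (hbound t ht (by rw [inv_div]; exact htt.le)).trans_eq (congrArg ENNReal.ofReal ?_)
    rw [mul_pow, Real.sq_sqrt hK.le, sq_rpow_mul_rpow ht.le hL.le]
    ring

/-- abstract two-sided Titchmarsh theorem for the modulus
ω(t) = t^α (log(1/t))^γ. With w(λ) ≍ λ^{d−1} for λ > 1 and w(λ) ≍ λ² for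
0 < λ ≤ 1, and a multiplier φ satisfying |φ| ≤ 1, |1 − φ(u)| ≤ Cφ u² and
|1 − φ(u)| ≥ cφ > 0 for u ≥ 1, the Plancherel quantity
N(t)² = ∫_0^∞ |1 − φ(λt)|² g(λ) w(λ) dλ satisfies
N(t) ≤ C₁ t^α (log(1/t))^γ for small t iff
∫_{1/t}^∞ g ≤ C₂ t^{2α+d−1}(log(1/t))^{2γ} for small t. -/
theorem abstract_titchmarsh_iff
    (d α γ : ℝ) (hd : 2 ≤ d) (hα : 0 < α) (hα2 : α < 2)
    (g : ℝ → ℝ) (hg : Measurable g) (hgnonneg : ∀ l, 0 ≤ g l)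
    (hgint : ∫⁻ l in Ioi (0:ℝ), ENNReal.ofReal (g l) < ⊤)
    (w : ℝ → ℝ) (hw : Measurable w)
    (c₁ c₂ : ℝ) (hc₁ : 0 < c₁) (hc₂ : 0 < c₂)
    (hwhigh : ∀ l : ℝ, 1 < l →
      c₁ * l ^ (d-1) ≤ w l ∧ w l ≤ c₂ * l ^ (d-1))
    (hwlow : ∀ l : ℝ, 0 < l → l ≤ 1 →
      c₁ * l ^ 2 ≤ w l ∧ w l ≤ c₂ * l ^ 2)
    (φ : ℝ → ℝ)
    (hφbdd : ∀ u : ℝ, 0 ≤ u → |φ u| ≤ 1)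
    (Cφ : ℝ) (hCφ : 0 < Cφ)
    (hφnear : ∀ u : ℝ, 0 ≤ u → |1 - φ u| ≤ Cφ * u ^ 2)
    (cφ : ℝ) (hcφ : 0 < cφ)
    (hφfar : ∀ u : ℝ, 1 ≤ u → cφ ≤ |1 - φ u|) :
    (∃ C₁ : ℝ, 0 < C₁ ∧ ∃ t₀ : ℝ, 0 < t₀ ∧ t₀ < 1 ∧
        ∀ t : ℝ, 0 < t → t < t₀ →
          ∫⁻ l in Ioi (0:ℝ),
              ENNReal.ofReal ((1 - φ (l * t)) ^ 2 * (g l * w l))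
            ≤ ENNReal.ofReal ((C₁ * (t ^ α * Real.log (1/t) ^ γ)) ^ 2))
      ↔
    (∃ C₂ : ℝ, 0 < C₂ ∧ ∃ t₁ : ℝ, 0 < t₁ ∧ t₁ < 1 ∧
        ∀ t : ℝ, 0 < t → t < t₁ →
          ∫⁻ l in Ioi (1/t), ENNReal.ofReal (g l)
            ≤ ENNReal.ofReal
                (C₂ * t ^ (2*α + d - 1) * Real.log (1/t) ^ (2*γ))) :=
  abstract_titchmarsh_iff_general d α γ hd hα hα2 g hgnonneg hgint w c₁ c₂ hc₁ hc₂ hwhigh hwlow φ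
    hφbdd Cφ hφnear cφ hcφ hφfar
end
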